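/- arXiv:1005.2320 — 4 statements merged into one kernel-verified Lean document; each statement's English description precedes it below -/
import Mathlib

section
/- For every 2n×2n complex matrix X and every i with 1 ≤ i ≤ n−1, the following determinantal identity holds: δ_{I_i}(X)·δ_{K_{i−1}}(X) = δ_{J′_i}(X)·δ_{J_{i−1}}(X) − δ_{J_i}(X)·δ_{J′_{i−1}}(X). -/
noncomputable section

namespace SpBranch


/-! Elements of `Fin (2*n)` carry the 1-based label `(x : ℕ) + 1`. -/

/-- The column set `I_i = {1, …, i}` (1-based labels). -/
def Iset (n i : ℕ) : Finset (Fin (2*n)) :=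
  Finset.univ.filter (fun x => (x : ℕ) + 1 ≤ i)

/-- The column set `J_j = {1, …, j} ∪ {n}` (1-based labels). -/
def Jset (n j : ℕ) : Finset (Fin (2*n)) :=
  Finset.univ.filter (fun x => (x : ℕ) + 1 ≤ j ∨ (x : ℕ) + 1 = n)

/-- The column set `J′_j = {1, …, j} ∪ {n+1}` (1-based labels). -/
def JPset (n j : ℕ) : Finset (Fin (2*n)) :=
  Finset.univ.filter (fun x => (x : ℕ) + 1 ≤ j ∨ (x : ℕ) + 1 = n + 1)

/-- The column set `K_k = {1, …, k} ∪ {n, n+1}` (1-based labels). -/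
def Kset (n k : ℕ) : Finset (Fin (2*n)) :=
  Finset.univ.filter (fun x => (x : ℕ) + 1 ≤ k ∨ (x : ℕ) + 1 = n ∨ (x : ℕ) + 1 = n + 1)

/-- The underlying set of the poset `𝓛`. -/
def LSet (n : ℕ) : Set (Finset (Fin (2*n))) :=
  {C | (∃ i, 1 ≤ i ∧ i ≤ n - 1 ∧ C = Iset n i) ∨
       (∃ j, j ≤ n - 1 ∧ C = Jset n j) ∨
       (∃ j, j ≤ n - 1 ∧ C = JPset n j) ∨
       (∃ k, k ≤ n - 2 ∧ C = Kset n k)}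

/-- The generating relations of the partial order `⪯` on `𝓛`:
`J_i ⪯ J′_i ⪯ I_i ⪯ J_{i−1}`, `J′_i ⪯ K_{i−1} ⪯ J_{i−1}`, `J_{i−1} ⪯ J′_{i−1}` for `1 ≤ i ≤ n−1`. -/
def LGen (n : ℕ) (C C' : Finset (Fin (2*n))) : Prop :=
  ∃ i, 1 ≤ i ∧ i ≤ n - 1 ∧
    ((C = Jset n i ∧ C' = JPset n i) ∨
     (C = JPset n i ∧ C' = Iset n i) ∨
     (C = JPset n i ∧ C' = Kset n (i-1)) ∨
     (C = Iset n i ∧ C' = Jset n (i-1)) ∨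
     (C = Kset n (i-1) ∧ C' = Jset n (i-1)) ∨
     (C = Jset n (i-1) ∧ C' = JPset n (i-1)))

/-- The partial order `⪯` on `𝓛`, generated by `LGen`. -/
def LLE (n : ℕ) : Finset (Fin (2*n)) → Finset (Fin (2*n)) → Prop :=
  Relation.ReflTransGen (LGen n)

/-- A multichain in `𝓛`: a finite weakly increasing sequence of elements of `𝓛`. -/
def IsMultichain (n : ℕ) (l : List (Finset (Fin (2*n)))) : Prop :=
  (∀ C ∈ l, C ∈ LSet n) ∧ l.Chain' (LLE n)

/-- `δ_C`: the minor of `X` on rows `1, …, |C|` and columns `C`. -/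
def deltaFn (n : ℕ) (C : Finset (Fin (2*n))) (X : Matrix (Fin (2*n)) (Fin (2*n)) ℂ) : ℂ :=
  Matrix.det (Matrix.of fun i j : Fin C.card =>
    X (Fin.castLE (le_trans C.card_le_univ (by simp)) i) ((C.orderIsoOfFin rfl j).1))

/-- The standard monomial `δ_Δ = δ_{C_1} ⋯ δ_{C_r}` attached to a list `Δ = (C_1, …, C_r)`. -/
def stdMonomial (n : ℕ) (l : List (Finset (Fin (2*n)))) (X : Matrix (Fin (2*n)) (Fin (2*n)) ℂ) : ℂ :=
  (l.map (fun C => deltaFn n C X)).prod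

/-- `f_i = #{j : |C_j| ≥ i}` for a list of column sets. -/
def shapeF (n : ℕ) (l : List (Finset (Fin (2*n)))) (i : ℕ) : ℕ :=
  (l.map (fun C => if i ≤ C.card then 1 else 0)).sum

/-- `d_k` = total number of occurrences of the (1-based) label `k` among the entries of the `C_j`. -/
def shapeD (n : ℕ) (l : List (Finset (Fin (2*n)))) (k : ℕ) : ℕ :=
  (l.map (fun C => if ∃ x : Fin (2*n), x ∈ C ∧ (x : ℕ) + 1 = k then 1 else 0)).sum

/-- `Δ` has shape `F/D` (with `F = (f_1, …, f_n)`, `D = (d_1, …, d_{n-1})`, read as functions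
on 1-based indices). -/
def HasShape (n : ℕ) (l : List (Finset (Fin (2*n)))) (d f : ℕ → ℕ) : Prop :=
  (∀ i, 1 ≤ i → shapeF n l i = f i) ∧ (∀ k, 1 ≤ k → k ≤ n - 1 → shapeD n l k = d k)

/-- A Young diagram with at most `m` rows, recorded as a function on 1-based indices. -/
def IsYoung (m : ℕ) (a : ℕ → ℕ) : Prop :=
  (∀ j k, 1 ≤ j → j ≤ k → a k ≤ a j) ∧ (∀ k, m < k → a k = 0)

/-- `A ⊑ B` : `b_i ≥ a_i ≥ b_{i+1}` for all `i ≥ 1`. -/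
def Interlaces (a b : ℕ → ℕ) : Prop :=
  ∀ i, 1 ≤ i → a i ≤ b i ∧ b (i+1) ≤ a i

/-- The skew-symmetric Gram matrix `[[0, Q_n], [−Q_n, 0]]`. -/
def Jmat (n : ℕ) : Matrix (Fin (2*n)) (Fin (2*n)) ℂ :=
  Matrix.of fun i j =>
    if (i : ℕ) + (j : ℕ) + 1 = 2*n then (if (i : ℕ) < n then 1 else -1) else 0

/-- `G_n = Sp_{2n}(ℂ)`, as a set of matrices. -/
def SpSet (n : ℕ) : Set (Matrix (Fin (2*n)) (Fin (2*n)) ℂ) :=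
  {g | IsUnit g ∧ g.transpose * Jmat n * g = Jmat n}

/-- `U_n⁻`: lower triangular matrices in `G_n` with 1's on the diagonal. -/
def UnMinusSet (n : ℕ) : Set (Matrix (Fin (2*n)) (Fin (2*n)) ℂ) :=
  {g | g ∈ SpSet n ∧ (∀ i j : Fin (2*n), i < j → g i j = 0) ∧ (∀ i, g i i = 1)}

/-- `U_{n−1}`: the image in `G_n` of the upper triangular unipotent subgroup of `G_{n−1}`,
under the embedding `[[A,B],[C,D]] ↦ [[A,0,B],[0,I_2,0],[C,0,D]]`; equivalently, upper
triangular unipotent elements of `G_n` whose rows and columns with (1-based) indices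
`n` and `n+1` agree with the identity matrix. -/
def Un1Set (n : ℕ) : Set (Matrix (Fin (2*n)) (Fin (2*n)) ℂ) :=
  {g | g ∈ SpSet n ∧ (∀ i j : Fin (2*n), j < i → g i j = 0) ∧ (∀ i, g i i = 1) ∧
    (∀ i j : Fin (2*n), ((i : ℕ) + 1 = n ∨ (i : ℕ) = n ∨ (j : ℕ) + 1 = n ∨ (j : ℕ) = n) →
      g i j = if i = j then 1 else 0)}

/-- `fb` is the restriction to `G_n` of a polynomial function on `M_{2n}(ℂ)`. -/
def IsPolyFn (n : ℕ) (fb : ↥(SpSet n) → ℂ) : Prop :=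
  ∃ P : MvPolynomial (Fin (2*n) × Fin (2*n)) ℂ,
    ∀ x : ↥(SpSet n),
      fb x = MvPolynomial.eval (fun rc => (x : Matrix (Fin (2*n)) (Fin (2*n)) ℂ) rc.1 rc.2) P

/-- `fb(u⁻¹ x v) = fb(x)` for `u ∈ U_n⁻`, `v ∈ U_{n−1}`. -/
def IsUInvariant (n : ℕ) (fb : ↥(SpSet n) → ℂ) : Prop :=
  ∀ u ∈ UnMinusSet n, ∀ v ∈ Un1Set n, ∀ x y : ↥(SpSet n),
    (y : Matrix (Fin (2*n)) (Fin (2*n)) ℂ) =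
      u⁻¹ * (x : Matrix (Fin (2*n)) (Fin (2*n)) ℂ) * v → fb y = fb x

/-- The branching algebra `B`, as a set of functions on `G_n`. -/
def BSet (n : ℕ) : Set (↥(SpSet n) → ℂ) :=
  {fb | IsPolyFn n fb ∧ IsUInvariant n fb}

/-- `t = diag(t_1, …, t_n, t_n⁻¹, …, t_1⁻¹)` (1-based data `t : ℕ → ℂ`). -/
def torusT (n : ℕ) (t : ℕ → ℂ) : Matrix (Fin (2*n)) (Fin (2*n)) ℂ :=
  Matrix.diagonal (fun p => if (p : ℕ) + 1 ≤ n then t ((p : ℕ) + 1) else (t (2*n - (p : ℕ)))⁻¹)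

/-- `s = diag(s_1, …, s_{n−1}, 1, 1, s_{n−1}⁻¹, …, s_1⁻¹)` (1-based data `s : ℕ → ℂ`). -/
def torusS (n : ℕ) (s : ℕ → ℂ) : Matrix (Fin (2*n)) (Fin (2*n)) ℂ :=
  Matrix.diagonal (fun p => if (p : ℕ) + 1 ≤ n - 1 then s ((p : ℕ) + 1)
    else if (p : ℕ) + 1 = n ∨ (p : ℕ) = n then 1 else (s (2*n - (p : ℕ)))⁻¹)



/-- The weight `wt(C) = Σ_r c_r N^{n−r}` of a column set (1-based entries `c_1 < c_2 < …`). -/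
def wtC (n N : ℕ) (C : Finset (Fin (2*n))) : ℕ :=
  ∑ r : Fin C.card, (((C.orderIsoOfFin rfl r).1 : ℕ) + 1) * N ^ (n - ((r : ℕ) + 1))

/-- A pair of Young diagrams `(D, F)` is of order type `σ` (where `σ i = true` means `≥`,
`σ i = false` means `≤`): for `1 ≤ i ≤ n−1`, `σ_i = ≥` implies `d_i ≥ f_{i+1}` and
`σ_i = ≤` implies `d_i ≤ f_{i+1}`. -/
def OfOrderType (n : ℕ) (σ : ℕ → Bool) (d f : ℕ → ℕ) : Prop :=
  ∀ i, 1 ≤ i → i ≤ n - 1 →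
    (σ i = true → f (i+1) ≤ d i) ∧ (σ i = false → d i ≤ f (i+1))

/-- The underlying set of the poset `Γ`: pairs `(i, j)` with `i ∈ {n−1, n, n+1}`,
`1 ≤ j ≤ min i n`, representing `t_j^{(i)}`. -/
def GammaCond (n : ℕ) (q : ℕ × ℕ) : Prop :=
  (q.1 = n - 1 ∨ q.1 = n ∨ q.1 = n + 1) ∧ 1 ≤ q.2 ∧ q.2 ≤ min q.1 n

instance (n : ℕ) : DecidablePred (GammaCond n) := fun q => by unfold GammaCond; infer_instance

def Gamma (n : ℕ) := {q : ℕ × ℕ // GammaCond n q}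

instance (n : ℕ) : DecidableEq (Gamma n) := Subtype.instDecidableEq

/-- The partial order on `Γ`, generated by `t_j^{(i+1)} ≥ t_j^{(i)}` and
`t_j^{(i)} ≥ t_{j+1}^{(i+1)}`. -/
def GammaLE (n : ℕ) : Gamma n → Gamma n → Prop :=
  Relation.ReflTransGen (fun a b =>
    (b.1.1 = a.1.1 + 1 ∧ b.1.2 = a.1.2) ∨ (a.1.1 = b.1.1 + 1 ∧ a.1.2 = b.1.2 + 1))

/-- Order-decreasing subset (down-set) of `Γ`. -/
def IsDownSet (n : ℕ) (S : Set (Gamma n)) : Prop :=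
  ∀ x ∈ S, ∀ y, GammaLE n y x → y ∈ S

/-- `m_C(k) = #{c ∈ C : c ≤ k}` (1-based labels). -/
def mC (n : ℕ) (C : Finset (Fin (2*n))) (k : ℕ) : ℕ :=
  (C.filter (fun x : Fin (2*n) => (x : ℕ) + 1 ≤ k)).card

/-- `S_C = ∪_k {t_1^{(k)}, …, t_{m_C(k)}^{(k)}} ⊆ Γ`. -/
def SCset (n : ℕ) (C : Finset (Fin (2*n))) : Set (Gamma n) :=
  {q | q.1.2 ≤ mC n C q.1.1}

/-- The characteristic function `χ_{S_C} : Γ → ℕ`. -/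
def chiS (n : ℕ) (C : Finset (Fin (2*n))) : Gamma n → ℕ :=
  fun q => if q.1.2 ≤ mC n C q.1.1 then 1 else 0

/-- `p(Δ) = Σ_i χ_{S_{C_i}}`. -/
def pMap (n : ℕ) (l : List (Finset (Fin (2*n)))) : Gamma n → ℕ :=
  fun q => (l.map (fun C => chiS n C q)).sum

/-- The monoid `𝓟(Γ)` of order-preserving maps `Γ → ℤ_{≥0}`, as an additive submonoid of
`Γ → ℕ` under pointwise addition. -/
def PGamma (n : ℕ) : AddSubmonoid (Gamma n → ℕ) where
  carrier := {p | ∀ x y, GammaLE n x y → p x ≤ p y}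
  add_mem' := fun ha hb x y h => add_le_add (ha x y h) (hb x y h)
  zero_mem' := fun _ _ _ => Nat.zero_le _



lemma deltaFn_eq {n r : ℕ} (C : Finset (Fin (2*n))) (e : Fin r → Fin (2*n))
    (hmono : StrictMono e) (hmem : ∀ j, e j ∈ C) (hsurj : ∀ x ∈ C, ∃ j, e j = x)
    (hr : r ≤ 2*n) (X : Matrix (Fin (2*n)) (Fin (2*n)) ℂ) :
    deltaFn n C X = Matrix.det (Matrix.of fun a b : Fin r =>
      X ⟨(a:ℕ), lt_of_lt_of_le a.2 hr⟩ (e b)) := by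
  have hcard : C.card = r := by
    have hC : C = Finset.image e Finset.univ := by
      ext x
      simp only [Finset.mem_image, Finset.mem_univ, true_and]
      exact ⟨fun hx => hsurj x hx, fun ⟨j, hj⟩ => hj ▸ hmem j⟩
    rw [hC, Finset.card_image_of_injective _ hmono.injective, Finset.card_univ,
      Fintype.card_fin]
  subst hcard
  unfold deltaFn
  congr 1
  funext a b
  simp only [Matrix.of_apply]
  rw [Finset.coe_orderIsoOfFin_apply, ← Finset.orderEmbOfFin_unique rfl hmem hmono]
  rfl

def colE (n p r a b : ℕ) (hp : p ≤ 2*n) (ha : a < 2*n) (hb : b < 2*n) :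
    Fin r → Fin (2*n) :=
  fun j => if hj : (j:ℕ) < p then ⟨j, by omega⟩ else
    if (j:ℕ) = p then ⟨a, ha⟩ else ⟨b, hb⟩

lemma colE_val (n p r a b : ℕ) (hp : p ≤ 2*n) (ha : a < 2*n) (hb : b < 2*n) (j : Fin r) :
    ((colE n p r a b hp ha hb j) : ℕ) =
      if (j:ℕ) < p then (j:ℕ) else if (j:ℕ) = p then a else b := by
  unfold colE
  split_ifs <;> rfl

lemma colE_mono (n p r a b : ℕ) (hp : p ≤ 2*n) (ha : a < 2*n) (hb : b < 2*n)
    (hpa : p ≤ a) (hab : a < b) (hr : r ≤ p+2) : StrictMono (colE n p r a b hp ha hb) := by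
  intro x y h
  have hx := x.isLt
  have hy := y.isLt
  rw [Fin.lt_def] at h ⊢
  rw [colE_val, colE_val]
  split_ifs <;> omega


lemma deltaFn_gen {n : ℕ} (p r a b : ℕ) (C : Finset (Fin (2*n)))
    (hp : p ≤ 2*n) (ha : a < 2*n) (hb : b < 2*n)
    (hpa : p ≤ a) (hab : a < b) (hpr : p ≤ r) (hr2 : r ≤ p+2) (hr : r ≤ 2*n)
    (hiff : ∀ x : Fin (2*n), x ∈ C ↔
      ((x:ℕ) < p ∨ ((x:ℕ) = a ∧ p < r) ∨ ((x:ℕ) = b ∧ p+1 < r)))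
    (X : Matrix (Fin (2*n)) (Fin (2*n)) ℂ) :
    deltaFn n C X = Matrix.det (Matrix.of fun i j : Fin r =>
      X ⟨(i:ℕ), lt_of_lt_of_le i.2 hr⟩ (colE n p r a b hp ha hb j)) := by
  refine deltaFn_eq C (colE n p r a b hp ha hb) (colE_mono n p r a b hp ha hb hpa hab hr2)
    ?_ ?_ hr X
  · intro j
    have hj := j.isLt
    rw [hiff, colE_val]
    split_ifs <;> omega
  · intro x hx
    rw [hiff] at hx
    refine ⟨⟨if (x:ℕ) < p then (x:ℕ) else if (x:ℕ) = a then p else p+1, by split_ifs <;> omega⟩,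
      Fin.ext ?_⟩
    simp only [colE_val, Fin.val_mk]
    split_ifs <;> omega


lemma succAbove_val {N : ℕ} (p : Fin (N+1)) (i : Fin N) :
    ((p.succAbove i : Fin (N+1)) : ℕ) = if (i:ℕ) < (p:ℕ) then (i:ℕ) else (i:ℕ)+1 := by
  unfold Fin.succAbove
  rcases lt_or_ge (Fin.castSucc i) p with h | h
  · rw [if_pos h, if_pos (by simpa [Fin.lt_def] using h)]
    simp
  · rw [if_neg (not_lt.2 h), if_neg (by have := Fin.le_def.1 h; simp only [Fin.coe_castSucc] at this; omega)]
    simp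

noncomputable def colDet (m : ℕ) (W : Matrix (Fin (m+1)) (Fin m) ℂ) (w : Fin (m+1) → ℂ) : ℂ :=
  Matrix.det (Matrix.of fun a b : Fin (m+1) => if h : (b:ℕ) < m then W a ⟨b, h⟩ else w a)

lemma colDet_eq_cramer (m : ℕ) (W : Matrix (Fin (m+1)) (Fin m) ℂ) (w : Fin (m+1) → ℂ) :
    colDet m W w = Matrix.cramer
      (Matrix.of fun a b : Fin (m+1) => if h : (b:ℕ) < m then W a ⟨b, h⟩ else 0) w (Fin.last m) := by
  rw [Matrix.cramer_apply, colDet]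
  congr 1
  funext a b
  by_cases hb : (b:ℕ) < m
  · have hbl : b ≠ Fin.last m := by
      intro h; rw [h] at hb; simp at hb
    rw [Matrix.updateCol_apply, if_neg hbl]
    simp [hb]
  · have hbl : b = Fin.last m := by
      apply Fin.ext; simp; omega
    rw [Matrix.updateCol_apply, if_pos hbl]
    simp [hb]

lemma colDet_sum (m : ℕ) (W : Matrix (Fin (m+1)) (Fin m) ℂ) (w : Fin (m+1) → ℂ) :
    colDet m W w = ∑ j, w j * colDet m W (Pi.single j 1) := by
  have hw : w = ∑ j, w j • (Pi.single j 1 : Fin (m+1) → ℂ) := by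
    funext k
    simp [Pi.single_apply, Finset.sum_ite_eq' Finset.univ k w]
  simp only [colDet_eq_cramer]
  conv_lhs => rw [hw]
  rw [map_sum]
  simp [Finset.sum_apply]

lemma colDet_repeat (m : ℕ) (W : Matrix (Fin (m+1)) (Fin m) ℂ) (j : Fin m) :
    colDet m W (fun a => W a j) = 0 := by
  apply Matrix.det_zero_of_column_eq (i := Fin.castSucc j) (j := Fin.last m)
  · intro h
    have := congrArg Fin.val h
    simp at this
    omega
  · intro a
    simp only [Matrix.of_apply, Fin.coe_castSucc, Fin.val_last]
    rw [dif_pos j.2, dif_neg (lt_irrefl m)]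

lemma plucker_key (M : ℕ) (u : Fin (M+1) → Fin M → ℂ) (c : Fin M → ℂ) :
    ∑ k : Fin (M+1), (-1:ℂ)^(k:ℕ) * (∑ j, c j * u k j) *
      Matrix.det (Matrix.of fun a b : Fin M => u (k.succAbove a) b) = 0 := by
  have hN : Matrix.det (Matrix.of fun k l : Fin (M+1) =>
      Fin.cons (∑ j, c j * u k j) (u k) l) = 0 := by
    rw [← Matrix.exists_mulVec_eq_zero_iff]
    refine ⟨Fin.cons (-1) c, ?_, ?_⟩
    · intro h
      have := congrFun h 0
      simp at this
    · funext k
      simp only [Matrix.mulVec, dotProduct, Fin.sum_univ_succ, Matrix.of_apply,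
        Fin.cons_zero, Fin.cons_succ, Pi.zero_apply]
      rw [Finset.sum_congr rfl (fun j _ => mul_comm (u k j) (c j))]
      ring
  rw [Matrix.det_succ_column_zero] at hN
  simpa [Matrix.submatrix] using hN

lemma plucker3 (m : ℕ) (Y : Matrix (Fin (m+2)) (Fin (m+3)) ℂ)
    (S : Fin (m+3) → ℂ)
    (hS : ∀ t, S t = Matrix.det (Matrix.of fun a b : Fin (m+1) =>
      Y (Fin.castSucc a) (if h : (b:ℕ) < m then ⟨b, by omega⟩ else t)))
    (B : Fin (m+3) → ℂ)
    (hB : ∀ k, B k = Matrix.det (Matrix.of fun a b : Fin (m+2) => Y a (k.succAbove b))) :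
    S ⟨m, by omega⟩ * B ⟨m, by omega⟩ =
      S ⟨m+1, by omega⟩ * B ⟨m+1, by omega⟩ - S ⟨m+2, by omega⟩ * B ⟨m+2, by omega⟩ := by
  set W : Matrix (Fin (m+1)) (Fin m) ℂ :=
    Matrix.of (fun a b => Y (Fin.castSucc a) ⟨b, by omega⟩) with hW
  set u : Fin (m+3) → Fin (m+2) → ℂ := fun k a => Y a k with hu
  set c : Fin (m+2) → ℂ :=
    fun j => if h : (j:ℕ) < m+1 then colDet m W (Pi.single ⟨j, h⟩ 1) else 0 with hc
  -- A : the linear functional evaluates to colDet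
  have hA : ∀ k : Fin (m+3), (∑ j, c j * u k j) = colDet m W (fun a => Y (Fin.castSucc a) k) := by
    intro k
    rw [colDet_sum, Fin.sum_univ_castSucc (n := m+1)]
    have hlast : c (Fin.last (m+1)) = 0 := by
      rw [hc]; simp
    rw [hlast, zero_mul, add_zero]
    apply Finset.sum_congr rfl
    intro j _
    have hcj : c (Fin.castSucc j) = colDet m W (Pi.single j 1) := by
      have hj : ((Fin.castSucc j) : ℕ) < m + 1 := by simp; have := j.isLt; omega
      simp only [hc]
      rw [dif_pos hj]
      congr 1
    rw [hcj, hu, mul_comm]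
  -- S' = S
  have hSA : ∀ k, colDet m W (fun a => Y (Fin.castSucc a) k) = S k := by
    intro k
    rw [hS, colDet]
    congr 1
    funext a b
    by_cases hb : (b:ℕ) < m
    · rw [Matrix.of_apply, Matrix.of_apply, dif_pos hb, dif_pos hb, hW]
      rfl
    · rw [Matrix.of_apply, Matrix.of_apply, dif_neg hb, dif_neg hb]
  -- minor = B
  have hBB : ∀ k : Fin (m+3),
      Matrix.det (Matrix.of fun a b : Fin (m+2) => u (k.succAbove a) b) = B k := by
    intro k
    rw [hB, ← Matrix.det_transpose]
    rfl
  -- the key identity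
  have hkey := plucker_key (m+2) u c
  -- restrict the sum to the three relevant indices
  set t0 : Fin (m+3) := ⟨m, by omega⟩
  set t1 : Fin (m+3) := ⟨m+1, by omega⟩
  set t2 : Fin (m+3) := ⟨m+2, by omega⟩
  have hzero : ∀ k : Fin (m+3), k ∉ ({t0, t1, t2} : Finset (Fin (m+3))) →
      (-1:ℂ)^(k:ℕ) * (∑ j, c j * u k j) *
        Matrix.det (Matrix.of fun a b : Fin (m+2) => u (k.succAbove a) b) = 0 := by
    intro k hk
    have hkv : (k:ℕ) < m := by
      by_contra hcon
      apply hk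
      simp only [Finset.mem_insert, Finset.mem_singleton]
      have hk3 : (k:ℕ) < m+3 := k.isLt
      have : (k:ℕ) = m ∨ (k:ℕ) = m+1 ∨ (k:ℕ) = m+2 := by omega
      rcases this with h|h|h
      · exact Or.inl (Fin.ext h)
      · exact Or.inr (Or.inl (Fin.ext h))
      · exact Or.inr (Or.inr (Fin.ext h))
    have : (∑ j, c j * u k j) = 0 := by
      rw [hA]
      have : (fun a => Y (Fin.castSucc a) k) = fun a => W a ⟨(k:ℕ), hkv⟩ := by
        funext a
        rw [hW]
        simp only [Matrix.of_apply]
      rw [this, colDet_repeat]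
    rw [this, mul_zero, zero_mul]
  have hsum : ∑ k ∈ ({t0, t1, t2} : Finset (Fin (m+3))),
      (-1:ℂ)^(k:ℕ) * (∑ j, c j * u k j) *
        Matrix.det (Matrix.of fun a b : Fin (m+2) => u (k.succAbove a) b) = 0 := by
    rw [Finset.sum_subset (Finset.subset_univ _) (fun x _ hx => hzero x hx)]
    exact hkey
  have ht01 : t0 ≠ t1 := by intro h; have := congrArg Fin.val h; simp [t0, t1] at this
  have ht02 : t0 ≠ t2 := by intro h; have := congrArg Fin.val h; simp [t0, t2] at this
  have ht12 : t1 ≠ t2 := by intro h; have := congrArg Fin.val h; simp [t1, t2] at this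
  rw [Finset.sum_insert (by simp [ht01, ht02]),
      Finset.sum_insert (by simp [ht12]), Finset.sum_singleton] at hsum
  rw [hA, hA, hA, hSA, hSA, hSA, hBB, hBB, hBB] at hsum
  have hv0 : ((t0 : Fin (m+3)) : ℕ) = m := rfl
  have hv1 : ((t1 : Fin (m+3)) : ℕ) = m+1 := rfl
  have hv2 : ((t2 : Fin (m+3)) : ℕ) = m+2 := rfl
  rw [hv0, hv1, hv2] at hsum
  have hne : ((-1:ℂ)^m) ≠ 0 := pow_ne_zero _ (by norm_num)
  apply mul_left_cancel₀ hne
  linear_combination hsum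

set_option maxHeartbeats 1000000

/-- the straightening relation
`δ_{I_i} δ_{K_{i−1}} = δ_{J′_i} δ_{J_{i−1}} − δ_{J_i} δ_{J′_{i−1}}` on `M_{2n}(ℂ)`. -/
theorem statement2 (n : ℕ) (hn : 2 ≤ n) (i : ℕ) (h1 : 1 ≤ i) (h2 : i ≤ n - 1)
    (X : Matrix (Fin (2*n)) (Fin (2*n)) ℂ) :
    deltaFn n (Iset n i) X * deltaFn n (Kset n (i-1)) X =
      deltaFn n (JPset n i) X * deltaFn n (Jset n (i-1)) X -
      deltaFn n (Jset n i) X * deltaFn n (JPset n (i-1)) X := by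
  obtain ⟨m, rfl⟩ : ∃ m, i = m + 1 := ⟨i - 1, by omega⟩
  have hm : m + 2 ≤ n := by omega
  simp only [Nat.add_sub_cancel]
  rw [deltaFn_gen (m+1) (m+1) (n-1) n (Iset n (m+1)) (by omega) (by omega) (by omega)
        (by omega) (by omega) (by omega) (by omega) (by omega)
        (fun x => by simp only [Iset, Finset.mem_filter, Finset.mem_univ, true_and]; omega) X,
      deltaFn_gen m (m+2) (n-1) n (Kset n m) (by omega) (by omega) (by omega)
        (by omega) (by omega) (by omega) (by omega) (by omega)
        (fun x => by simp only [Kset, Finset.mem_filter, Finset.mem_univ, true_and]; omega) X,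
      deltaFn_gen (m+1) (m+2) n (n+1) (JPset n (m+1)) (by omega) (by omega) (by omega)
        (by omega) (by omega) (by omega) (by omega) (by omega)
        (fun x => by simp only [JPset, Finset.mem_filter, Finset.mem_univ, true_and]; omega) X,
      deltaFn_gen m (m+1) (n-1) n (Jset n m) (by omega) (by omega) (by omega)
        (by omega) (by omega) (by omega) (by omega) (by omega)
        (fun x => by simp only [Jset, Finset.mem_filter, Finset.mem_univ, true_and]; omega) X,
      deltaFn_gen (m+1) (m+2) (n-1) n (Jset n (m+1)) (by omega) (by omega) (by omega)
        (by omega) (by omega) (by omega) (by omega) (by omega)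
        (fun x => by simp only [Jset, Finset.mem_filter, Finset.mem_univ, true_and]; omega) X,
      deltaFn_gen m (m+1) n (n+1) (JPset n m) (by omega) (by omega) (by omega)
        (by omega) (by omega) (by omega) (by omega) (by omega)
        (fun x => by simp only [JPset, Finset.mem_filter, Finset.mem_univ, true_and]; omega) X]
  have hp3 := plucker3 m
    (Matrix.of fun (a : Fin (m+2)) (b : Fin (m+3)) =>
      X ⟨(a:ℕ), by omega⟩ (colE n (m+1) (m+3) (n-1) n (by omega) (by omega) (by omega) b))
    _ (fun t => rfl) _ (fun k => rfl)
  simp only [Matrix.of_apply] at hp3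
  have eS0 : (Matrix.of fun (a : Fin (m+1)) (b : Fin (m+1)) =>
      X (⟨((Fin.castSucc a):ℕ), by omega⟩ : Fin (2*n))
        (colE n (m+1) (m+3) (n-1) n (by omega) (by omega) (by omega)
          (if h : (b:ℕ) < m then (⟨(b:ℕ), by omega⟩ : Fin (m+3)) else ⟨m, by omega⟩))).det = (Matrix.of fun (i : Fin (m+1)) (j : Fin (m+1)) =>
      X (⟨(i:ℕ), by omega⟩ : Fin (2*n)) (colE n (m+1) (m+1) (n-1) n (by omega) (by omega) (by omega) j)).det := by
    refine congrArg Matrix.det ?_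
    funext a b
    refine congrArg₂ (fun (r c : Fin (2*n)) => X r c) (Fin.ext (by simp)) (Fin.ext ?_)
    have hb2 := b.isLt
    by_cases hb : (b:ℕ) < m
    · rw [dif_pos hb] <;> rw [colE_val, colE_val] <;> simp only [Fin.val_mk] <;>
        split_ifs <;> omega
    · rw [dif_neg hb] <;> rw [colE_val, colE_val] <;> simp only [Fin.val_mk] <;>
        split_ifs <;> omega
  have eS1 : (Matrix.of fun (a : Fin (m+1)) (b : Fin (m+1)) =>
      X (⟨((Fin.castSucc a):ℕ), by omega⟩ : Fin (2*n))
        (colE n (m+1) (m+3) (n-1) n (by omega) (by omega) (by omega)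
          (if h : (b:ℕ) < m then (⟨(b:ℕ), by omega⟩ : Fin (m+3)) else ⟨m+1, by omega⟩))).det = (Matrix.of fun (i : Fin (m+1)) (j : Fin (m+1)) =>
      X (⟨(i:ℕ), by omega⟩ : Fin (2*n)) (colE n m (m+1) (n-1) n (by omega) (by omega) (by omega) j)).det := by
    refine congrArg Matrix.det ?_
    funext a b
    refine congrArg₂ (fun (r c : Fin (2*n)) => X r c) (Fin.ext (by simp)) (Fin.ext ?_)
    have hb2 := b.isLt
    by_cases hb : (b:ℕ) < m
    · rw [dif_pos hb] <;> rw [colE_val, colE_val] <;> simp only [Fin.val_mk] <;>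
        split_ifs <;> omega
    · rw [dif_neg hb] <;> rw [colE_val, colE_val] <;> simp only [Fin.val_mk] <;>
        split_ifs <;> omega
  have eS2 : (Matrix.of fun (a : Fin (m+1)) (b : Fin (m+1)) =>
      X (⟨((Fin.castSucc a):ℕ), by omega⟩ : Fin (2*n))
        (colE n (m+1) (m+3) (n-1) n (by omega) (by omega) (by omega)
          (if h : (b:ℕ) < m then (⟨(b:ℕ), by omega⟩ : Fin (m+3)) else ⟨m+2, by omega⟩))).det = (Matrix.of fun (i : Fin (m+1)) (j : Fin (m+1)) =>
      X (⟨(i:ℕ), by omega⟩ : Fin (2*n)) (colE n m (m+1) n (n+1) (by omega) (by omega) (by omega) j)).det := by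
    refine congrArg Matrix.det ?_
    funext a b
    refine congrArg₂ (fun (r c : Fin (2*n)) => X r c) (Fin.ext (by simp)) (Fin.ext ?_)
    have hb2 := b.isLt
    by_cases hb : (b:ℕ) < m
    · rw [dif_pos hb] <;> rw [colE_val, colE_val] <;> simp only [Fin.val_mk] <;>
        split_ifs <;> omega
    · rw [dif_neg hb] <;> rw [colE_val, colE_val] <;> simp only [Fin.val_mk] <;>
        split_ifs <;> omega
  have eB0 : (Matrix.of fun (a : Fin (m+2)) (b : Fin (m+2)) =>
      X (⟨(a:ℕ), by omega⟩ : Fin (2*n))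
        (colE n (m+1) (m+3) (n-1) n (by omega) (by omega) (by omega)
          ((⟨m, by omega⟩ : Fin (m+3)).succAbove b))).det = (Matrix.of fun (i : Fin (m+2)) (j : Fin (m+2)) =>
      X (⟨(i:ℕ), by omega⟩ : Fin (2*n)) (colE n m (m+2) (n-1) n (by omega) (by omega) (by omega) j)).det := by
    refine congrArg Matrix.det ?_
    funext a b
    refine congrArg₂ (fun (r c : Fin (2*n)) => X r c) rfl (Fin.ext ?_)
    have hb2 := b.isLt
    rw [colE_val, succAbove_val, colE_val] <;> simp only [Fin.val_mk] <;>
      split_ifs <;> omega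
  have eB1 : (Matrix.of fun (a : Fin (m+2)) (b : Fin (m+2)) =>
      X (⟨(a:ℕ), by omega⟩ : Fin (2*n))
        (colE n (m+1) (m+3) (n-1) n (by omega) (by omega) (by omega)
          ((⟨m+1, by omega⟩ : Fin (m+3)).succAbove b))).det = (Matrix.of fun (i : Fin (m+2)) (j : Fin (m+2)) =>
      X (⟨(i:ℕ), by omega⟩ : Fin (2*n)) (colE n (m+1) (m+2) n (n+1) (by omega) (by omega) (by omega) j)).det := by
    refine congrArg Matrix.det ?_
    funext a b
    refine congrArg₂ (fun (r c : Fin (2*n)) => X r c) rfl (Fin.ext ?_)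
    have hb2 := b.isLt
    rw [colE_val, succAbove_val, colE_val] <;> simp only [Fin.val_mk] <;>
      split_ifs <;> omega
  have eB2 : (Matrix.of fun (a : Fin (m+2)) (b : Fin (m+2)) =>
      X (⟨(a:ℕ), by omega⟩ : Fin (2*n))
        (colE n (m+1) (m+3) (n-1) n (by omega) (by omega) (by omega)
          ((⟨m+2, by omega⟩ : Fin (m+3)).succAbove b))).det = (Matrix.of fun (i : Fin (m+2)) (j : Fin (m+2)) =>
      X (⟨(i:ℕ), by omega⟩ : Fin (2*n)) (colE n (m+1) (m+2) (n-1) n (by omega) (by omega) (by omega) j)).det := by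
    refine congrArg Matrix.det ?_
    funext a b
    refine congrArg₂ (fun (r c : Fin (2*n)) => X r c) rfl (Fin.ext ?_)
    have hb2 := b.isLt
    rw [colE_val, succAbove_val, colE_val] <;> simp only [Fin.val_mk] <;>
      split_ifs <;> omega
  rw [eS0, eS1, eS2, eB0, eB1, eB2] at hp3
  linear_combination hp3

end SpBranch
end
end

section
/- For every C ∈ 𝓛, every X ∈ M_{2n}(ℂ), every u ∈ U_n⁻, and every v ∈ U_{n−1}, one has δ_C(u⁻¹Xv) = δ_C(X). In other words, each function δ_C, restricted to G_n, is invariant under the action ((u,v)·f)(x) = f(u⁻¹xv) of U_n⁻ × U_{n−1}. -/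
noncomputable section

namespace SpBranch


/-! Auxiliary lemmas for `statement4`. -/

lemma sum_restrict' {n r : ℕ} (hle : r ≤ 2*n) (f : Fin (2*n) → ℂ)
    (hf : ∀ a : Fin (2*n), r ≤ (a : ℕ) → f a = 0) :
    ∑ i : Fin r, f (Fin.castLE hle i) = ∑ a : Fin (2*n), f a := by
  classical
  have h1 : ∑ i : Fin r, f (Fin.castLE hle i)
      = ∑ a ∈ Finset.univ.map ⟨Fin.castLE hle, Fin.castLE_injective hle⟩, f a := by
    rw [Finset.sum_map]; rfl
  rw [h1]
  apply Finset.sum_subset (Finset.subset_univ _)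
  intro a _ ha
  apply hf
  by_contra h
  push_neg at h
  exact ha (Finset.mem_map.mpr ⟨⟨a, h⟩, Finset.mem_univ _, Fin.ext rfl⟩)

lemma sum_overC' {n : ℕ} (C : Finset (Fin (2*n))) (f : Fin (2*n) → ℂ)
    (hf : ∀ a, a ∉ C → f a = 0) :
    ∑ j : Fin C.card, f ((C.orderIsoOfFin rfl j).1) = ∑ a : Fin (2*n), f a := by
  classical
  have h1 : ∑ j : Fin C.card, f ((C.orderIsoOfFin rfl j).1) = ∑ x : {x // x ∈ C}, f x :=
    Fintype.sum_equiv (C.orderIsoOfFin rfl).toEquiv _ _ (fun j => rfl)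
  rw [h1, Finset.sum_coe_sort C f]
  apply Finset.sum_subset (Finset.subset_univ _)
  exact fun a _ ha => hf a ha

lemma deltaFn_eq_s4 (n : ℕ) (C : Finset (Fin (2*n))) (hle : C.card ≤ 2*n)
    (Z : Matrix (Fin (2*n)) (Fin (2*n)) ℂ) :
    deltaFn n C Z = (Matrix.of fun i j : Fin C.card =>
      Z (Fin.castLE hle i) ((C.orderIsoOfFin rfl j).1)).det := rfl

lemma deltaFn_left (n : ℕ) (C : Finset (Fin (2*n)))
    (u Y : Matrix (Fin (2*n)) (Fin (2*n)) ℂ)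
    (hlt : ∀ i j : Fin (2*n), i < j → u i j = 0)
    (hdiag : ∀ i, u i i = 1) :
    deltaFn n C (u * Y) = deltaFn n C Y := by
  classical
  have hle : C.card ≤ 2*n := le_trans C.card_le_univ (by simp)
  set e : Fin C.card → Fin (2*n) := Fin.castLE hle with he
  set g : Fin C.card → Fin (2*n) := fun j => ((C.orderIsoOfFin rfl j) : Fin (2*n)) with hg
  rw [deltaFn_eq_s4 n C hle, deltaFn_eq_s4 n C hle]
  have key : (Matrix.of fun i j : Fin C.card => (u * Y) (e i) (g j))
      = (Matrix.of fun i i' : Fin C.card => u (e i) (e i')) *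
        (Matrix.of fun i' j : Fin C.card => Y (e i') (g j)) := by
    ext i j
    simp only [Matrix.of_apply, Matrix.mul_apply]
    refine (sum_restrict' hle (fun a => u (e i) a * Y a (g j)) ?_).symm
    intro a ha
    have h1 : e i < a := by
      have h2 : ((e i : Fin (2*n)) : ℕ) = (i : ℕ) := rfl
      have h3 : (i : ℕ) < C.card := i.2
      exact Fin.lt_def.mpr (by omega)
    show u (e i) a * Y a (g j) = 0
    rw [hlt _ _ h1, zero_mul]
  rw [key, Matrix.det_mul]
  have hL : (Matrix.of fun i i' : Fin C.card => u (e i) (e i')).det = 1 := by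
    rw [Matrix.det_of_lowerTriangular]
    · simp [hdiag]
    · intro i j hij
      exact hlt _ _ (Fin.strictMono_castLE hle hij)
  rw [hL, one_mul]

lemma deltaFn_right (n : ℕ) (C : Finset (Fin (2*n)))
    (Y v : Matrix (Fin (2*n)) (Fin (2*n)) ℂ)
    (hclosed : ∀ b c : Fin (2*n), b ∉ C → c ∈ C → v b c = 0)
    (hlow : ∀ i j : Fin (2*n), j < i → v i j = 0)
    (hdiag : ∀ i, v i i = 1) :
    deltaFn n C (Y * v) = deltaFn n C Y := by
  classical
  have hle : C.card ≤ 2*n := le_trans C.card_le_univ (by simp)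
  set e : Fin C.card → Fin (2*n) := Fin.castLE hle with he
  set g : Fin C.card → Fin (2*n) := fun j => ((C.orderIsoOfFin rfl j) : Fin (2*n)) with hg
  have hgC : ∀ j, g j ∈ C := fun j => (C.orderIsoOfFin rfl j).2
  rw [deltaFn_eq_s4 n C hle, deltaFn_eq_s4 n C hle]
  have key : (Matrix.of fun i j : Fin C.card => (Y * v) (e i) (g j))
      = (Matrix.of fun i j' : Fin C.card => Y (e i) (g j')) *
        (Matrix.of fun j' j : Fin C.card => v (g j') (g j)) := by
    ext i j
    simp only [Matrix.of_apply, Matrix.mul_apply]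
    refine (sum_overC' C (fun b => Y (e i) b * v b (g j)) ?_).symm
    intro b hb
    show Y (e i) b * v b (g j) = 0
    rw [hclosed b (g j) hb (hgC j), mul_zero]
  rw [key, Matrix.det_mul]
  have hM : (Matrix.of fun j' j : Fin C.card => v (g j') (g j)).det = 1 := by
    rw [Matrix.det_of_upperTriangular]
    · simp [hdiag]
    · intro j' j hj
      have hglt : g j < g j' :=
        Subtype.coe_lt_coe.mpr ((C.orderIsoOfFin rfl).strictMono hj)
      exact hlow _ _ hglt
  rw [hM, mul_one]

/-- each `δ_C`, `C ∈ 𝓛`, satisfies `δ_C(u⁻¹ X v) = δ_C(X)` for all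
`X ∈ M_{2n}(ℂ)`, `u ∈ U_n⁻`, `v ∈ U_{n−1}`; in particular its restriction to `G_n` is
invariant under the action `((u,v)·f)(x) = f(u⁻¹ x v)` of `U_n⁻ × U_{n−1}`. -/
theorem statement4 (n : ℕ) (hn : 2 ≤ n) (C : Finset (Fin (2*n))) (hC : C ∈ LSet n)
    (X : Matrix (Fin (2*n)) (Fin (2*n)) ℂ)
    (u : Matrix (Fin (2*n)) (Fin (2*n)) ℂ) (hu : u ∈ UnMinusSet n)
    (v : Matrix (Fin (2*n)) (Fin (2*n)) ℂ) (hv : v ∈ Un1Set n) :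
    deltaFn n C (u⁻¹ * X * v) = deltaFn n C X := by
  classical
  obtain ⟨husp, hult, hudiag⟩ := hu
  obtain ⟨hvsp, hvlow, hvdiag, hvid⟩ := hv
  -- closedness of C under the column structure of v
  have hclosed : ∀ b c : Fin (2*n), b ∉ C → c ∈ C → v b c = 0 := by
    intro b c hb hc
    have hne : b ≠ c := fun h => hb (h ▸ hc)
    have hid : ∀ (_ : (c : ℕ) + 1 = n ∨ (c : ℕ) = n), v b c = 0 := by
      intro hcn
      rw [hvid b c (Or.inr (Or.inr (by tauto)))]
      simp [hne]
    rcases hC with ⟨i, hi1, hi2, rfl⟩ | ⟨j, hj, rfl⟩ | ⟨j, hj, rfl⟩ | ⟨k, hk, rfl⟩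
    · simp only [Iset, Finset.mem_filter, Finset.mem_univ, true_and] at hb hc
      exact hvlow b c (Fin.lt_def.mpr (by omega))
    · simp only [Jset, Finset.mem_filter, Finset.mem_univ, true_and] at hb hc
      push_neg at hb
      rcases hc with hc | hc
      · exact hvlow b c (Fin.lt_def.mpr (by omega))
      · exact hid (Or.inl hc)
    · simp only [JPset, Finset.mem_filter, Finset.mem_univ, true_and] at hb hc
      push_neg at hb
      rcases hc with hc | hc
      · exact hvlow b c (Fin.lt_def.mpr (by omega))
      · exact hid (Or.inr (by omega))
    · simp only [Kset, Finset.mem_filter, Finset.mem_univ, true_and] at hb hc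
      push_neg at hb
      rcases hc with hc | hc | hc
      · exact hvlow b c (Fin.lt_def.mpr (by omega))
      · exact hid (Or.inl hc)
      · exact hid (Or.inr (by omega))
  have hudet : IsUnit u.det := (Matrix.isUnit_iff_isUnit_det u).mp husp.1
  have huinv : u * u⁻¹ = 1 := Matrix.mul_nonsing_inv u hudet
  calc deltaFn n C (u⁻¹ * X * v)
      = deltaFn n C (u * (u⁻¹ * X * v)) := (deltaFn_left n C u _ hult hudiag).symm
    _ = deltaFn n C (X * v) := by
        rw [show u * (u⁻¹ * X * v) = X * v by
          rw [← mul_assoc, ← mul_assoc, huinv, one_mul]]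
    _ = deltaFn n C X := deltaFn_right n C X v hclosed hvlow hvdiag


end SpBranch
end
end

section
/- Assign to each element of 𝓛 a word of length n−1 in the alphabet {≥, ≤, =} (its generalized order type) as follows: I_i has symbol ≥ in position i and = elsewhere; K_k has symbol ≤ in position k+1 and = elsewhere; every J_j and every J′_j has = in every position. Say that a set of elements of 𝓛 satisfies an order type σ = (σ_1,…,σ_{n−1}) ∈ {≥,≤}^{n−1} if for every element of the set and every position i, the element's generalized-type symbol at position i is either = or equal to σ_i. Then a finite collection {C_1, …, C_r} of elements of 𝓛 is totally ordered by ⪯ (forms a chain) if and only if there exists an order type σ satisfied by all of C_1, …, C_r. -/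
noncomputable section

namespace SpBranch


/-- `C ∈ 𝓛` satisfies the order type `σ` (with `true = "≥"`, `false = "≤"`): at every
position the generalized-type symbol of `C` is either `=` or agrees with `σ`.  The
generalized type of `I_i` has `≥` in position `i` and `=` elsewhere, that of `K_k` has `≤`
in position `k+1` and `=` elsewhere, and those of `J_j`, `J′_j` have `=` everywhere. -/
def SatisfiesType (n : ℕ) (C : Finset (Fin (2*n))) (σ : ℕ → Bool) : Prop :=
  (∃ i, 1 ≤ i ∧ i ≤ n - 1 ∧ C = Iset n i ∧ σ i = true) ∨
  (∃ k, k ≤ n - 2 ∧ C = Kset n k ∧ σ (k+1) = false) ∨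
  (∃ j, j ≤ n - 1 ∧ C = Jset n j) ∨
  (∃ j, j ≤ n - 1 ∧ C = JPset n j)

-- ===== auxiliary lemmas for statement8 =====

lemma card_lt_aux (N i : ℕ) (h : i ≤ N) :
    ((Finset.univ : Finset (Fin N)).filter (fun x : Fin N => (x:ℕ) + 1 ≤ i)).card = i := by
  have key := Finset.card_bij (s := (Finset.univ : Finset (Fin N)).filter (fun x : Fin N => (x:ℕ) + 1 ≤ i))
    (t := Finset.range i) (fun x _ => (x:ℕ))
  rw [Finset.card_range] at key
  apply key
  · intro a ha
    simp only [Finset.mem_filter] at ha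
    simp only [Finset.mem_range]; omega
  · intro a _ b _ hab; exact Fin.val_injective hab
  · intro b hb
    simp only [Finset.mem_range] at hb
    exact ⟨⟨b, lt_of_lt_of_le hb h⟩, by simp; omega, rfl⟩

def hv (n : ℕ) (C : Finset (Fin (2*n))) : ℤ :=
  3*((n:ℤ)-1) - 3*((C.filter (fun x : Fin (2*n) => (x:ℕ)+1 ≤ n-1)).card : ℤ) +
    (if ∃ x ∈ C, (x:ℕ)+1 = n then (if ∃ x ∈ C, (x:ℕ)+1 = n+1 then -1 else 0)
     else (if ∃ x ∈ C, (x:ℕ)+1 = n+1 then 1 else 2))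

-- membership lemmas
lemma exn_J (n j : ℕ) (hn : 2 ≤ n) : ∃ x ∈ Jset n j, (x:ℕ)+1 = n :=
  ⟨⟨n-1, by omega⟩, by simp [Jset]; omega, by simp; omega⟩
lemma exn1_JP (n j : ℕ) (hn : 2 ≤ n) : ∃ x ∈ JPset n j, (x:ℕ)+1 = n+1 :=
  ⟨⟨n, by omega⟩, by simp [JPset], by simp⟩
lemma exn_K (n k : ℕ) (hn : 2 ≤ n) : ∃ x ∈ Kset n k, (x:ℕ)+1 = n :=
  ⟨⟨n-1, by omega⟩, by simp [Kset]; omega, by simp; omega⟩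
lemma exn1_K (n k : ℕ) (hn : 2 ≤ n) : ∃ x ∈ Kset n k, (x:ℕ)+1 = n+1 :=
  ⟨⟨n, by omega⟩, by simp [Kset], by simp⟩
lemma noexn_I (n i : ℕ) (h2 : i ≤ n-1) : ¬ ∃ x ∈ Iset n i, (x:ℕ)+1 = n := by
  rintro ⟨x, hx, h⟩; simp [Iset] at hx; omega
lemma noexn1_I (n i : ℕ) (h2 : i ≤ n-1) : ¬ ∃ x ∈ Iset n i, (x:ℕ)+1 = n+1 := by
  rintro ⟨x, hx, h⟩; simp [Iset] at hx; omega
lemma noexn1_J (n j : ℕ) (hj : j ≤ n-1) : ¬ ∃ x ∈ Jset n j, (x:ℕ)+1 = n+1 := by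
  rintro ⟨x, hx, h⟩; simp [Jset] at hx; omega
lemma noexn_JP (n j : ℕ) (hn : 2 ≤ n) (hj : j ≤ n-1) : ¬ ∃ x ∈ JPset n j, (x:ℕ)+1 = n := by
  rintro ⟨x, hx, h⟩; simp [JPset] at hx; omega

-- filter card lemmas
lemma cardf_I (n i : ℕ) (h2 : i ≤ n-1) :
    ((Iset n i).filter (fun x : Fin (2*n) => (x:ℕ)+1 ≤ n-1)).card = i := by
  unfold Iset
  rw [Finset.filter_filter, Finset.filter_congr (q := fun x : Fin (2*n) => (x:ℕ)+1 ≤ i)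
    (fun x _ => by constructor <;> intro h <;> [exact h.1; exact ⟨h, by omega⟩])]
  exact card_lt_aux (2*n) i (by omega)
lemma cardf_J (n j : ℕ) (hj : j ≤ n-1) :
    ((Jset n j).filter (fun x : Fin (2*n) => (x:ℕ)+1 ≤ n-1)).card = j := by
  unfold Jset
  rw [Finset.filter_filter, Finset.filter_congr (q := fun x : Fin (2*n) => (x:ℕ)+1 ≤ j)
    (fun x _ => by constructor <;> intro h <;> omega)]
  exact card_lt_aux (2*n) j (by omega)
lemma cardf_JP (n j : ℕ) (hj : j ≤ n-1) :
    ((JPset n j).filter (fun x : Fin (2*n) => (x:ℕ)+1 ≤ n-1)).card = j := by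
  unfold JPset
  rw [Finset.filter_filter, Finset.filter_congr (q := fun x : Fin (2*n) => (x:ℕ)+1 ≤ j)
    (fun x _ => by constructor <;> intro h <;> omega)]
  exact card_lt_aux (2*n) j (by omega)
lemma cardf_K (n k : ℕ) (hk : k ≤ n-2) :
    ((Kset n k).filter (fun x : Fin (2*n) => (x:ℕ)+1 ≤ n-1)).card = k := by
  unfold Kset
  rw [Finset.filter_filter, Finset.filter_congr (q := fun x : Fin (2*n) => (x:ℕ)+1 ≤ k)
    (fun x _ => by constructor <;> intro h <;> omega)]
  exact card_lt_aux (2*n) k (by omega)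

-- hv formulas
lemma hv_I (n i : ℕ) (hn : 2 ≤ n) (h2 : i ≤ n-1) :
    hv n (Iset n i) = 3*((n:ℤ)-1-i) + 2 := by
  rw [hv, if_neg (noexn_I n i h2), if_neg (noexn1_I n i h2), cardf_I n i h2]; ring
lemma hv_J (n j : ℕ) (hn : 2 ≤ n) (hj : j ≤ n-1) :
    hv n (Jset n j) = 3*((n:ℤ)-1-j) := by
  rw [hv, if_pos (exn_J n j hn), if_neg (noexn1_J n j hj), cardf_J n j hj]; ring
lemma hv_JP (n j : ℕ) (hn : 2 ≤ n) (hj : j ≤ n-1) :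
    hv n (JPset n j) = 3*((n:ℤ)-1-j) + 1 := by
  rw [hv, if_neg (noexn_JP n j hn hj), if_pos (exn1_JP n j hn), cardf_JP n j hj]; ring
lemma hv_K (n k : ℕ) (hn : 2 ≤ n) (hk : k ≤ n-2) :
    hv n (Kset n k) = 3*((n:ℤ)-1-k) - 1 := by
  rw [hv, if_pos (exn_K n k hn), if_pos (exn1_K n k hn), cardf_K n k hk]; ring


lemma hv_step (n : ℕ) (hn : 2 ≤ n) {C C' : Finset (Fin (2*n))}
    (h : LGen n C C') : hv n C' = hv n C + 1 := by
  obtain ⟨i, hi1, hi2, hcase⟩ := h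
  have e1 : ((i - 1 : ℕ) : ℤ) = (i : ℤ) - 1 := by omega
  rcases hcase with ⟨h1,h2⟩|⟨h1,h2⟩|⟨h1,h2⟩|⟨h1,h2⟩|⟨h1,h2⟩|⟨h1,h2⟩ <;> subst h1 <;> subst h2
  · rw [hv_J n i hn hi2, hv_JP n i hn hi2]
  · rw [hv_JP n i hn hi2, hv_I n i hn hi2]; ring
  · rw [hv_JP n i hn hi2, hv_K n (i-1) hn (by omega), e1]; ring
  · rw [hv_I n i hn hi2, hv_J n (i-1) hn (by omega), e1]; ring
  · rw [hv_K n (i-1) hn (by omega), hv_J n (i-1) hn (by omega)]; ring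
  · rw [hv_J n (i-1) hn (by omega), hv_JP n (i-1) hn (by omega)]

lemma lgen_mem_right (n : ℕ) {C C' : Finset (Fin (2*n))} (h : LGen n C C') : C' ∈ LSet n := by
  obtain ⟨i, hi1, hi2, hcase⟩ := h
  rcases hcase with ⟨h1,h2⟩|⟨h1,h2⟩|⟨h1,h2⟩|⟨h1,h2⟩|⟨h1,h2⟩|⟨h1,h2⟩ <;> subst h2
  · exact Or.inr (Or.inr (Or.inl ⟨i, hi2, rfl⟩))
  · exact Or.inl ⟨i, hi1, hi2, rfl⟩
  · exact Or.inr (Or.inr (Or.inr ⟨i-1, by omega, rfl⟩))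
  · exact Or.inr (Or.inl ⟨i-1, by omega, rfl⟩)
  · exact Or.inr (Or.inl ⟨i-1, by omega, rfl⟩)
  · exact Or.inr (Or.inr (Or.inl ⟨i-1, by omega, rfl⟩))

lemma hv_bound (n : ℕ) (hn : 2 ≤ n) {C : Finset (Fin (2*n))} (hC : C ∈ LSet n) :
    0 ≤ hv n C ∧ hv n C ≤ 3*((n:ℤ)-1) + 1 := by
  rcases hC with ⟨i,hi1,hi2,rfl⟩|⟨j,hj,rfl⟩|⟨j,hj,rfl⟩|⟨k,hk,rfl⟩
  · rw [hv_I n i hn hi2]; omega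
  · rw [hv_J n j hn hj]; omega
  · rw [hv_JP n j hn hj]; omega
  · rw [hv_K n k hn hk]; omega

lemma succ_ex (n : ℕ) (hn : 2 ≤ n) {C : Finset (Fin (2*n))} (hC : C ∈ LSet n)
    (hlt : hv n C < 3*((n:ℤ)-1)+1) : ∃ D, LGen n C D := by
  rcases hC with ⟨i,hi1,hi2,rfl⟩|⟨j,hj,rfl⟩|⟨j,hj,rfl⟩|⟨k,hk,rfl⟩
  · exact ⟨Jset n (i-1), ⟨i, hi1, hi2, Or.inr (Or.inr (Or.inr (Or.inl ⟨rfl, rfl⟩)))⟩⟩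
  · by_cases hj1 : 1 ≤ j
    · exact ⟨JPset n j, ⟨j, hj1, hj, Or.inl ⟨rfl, rfl⟩⟩⟩
    · have : j = 0 := by omega
      subst this
      exact ⟨JPset n 0, ⟨1, le_refl 1, by omega, Or.inr (Or.inr (Or.inr (Or.inr (Or.inr ⟨rfl, rfl⟩))))⟩⟩
  · have hj1 : 1 ≤ j := by
      by_contra hcon
      have : j = 0 := by omega
      subst this
      rw [hv_JP n 0 hn (by omega)] at hlt
      omega
    exact ⟨Iset n j, ⟨j, hj1, hj, Or.inr (Or.inl ⟨rfl, rfl⟩)⟩⟩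
  · exact ⟨Jset n k, ⟨k+1, by omega, by omega, Or.inr (Or.inr (Or.inr (Or.inr (Or.inl ⟨rfl, rfl⟩))))⟩⟩

lemma adj (n : ℕ) (hn : 2 ≤ n) {C C' : Finset (Fin (2*n))} (hC : C ∈ LSet n) (hC' : C' ∈ LSet n)
    (h : hv n C + 1 = hv n C') : LGen n C C' := by
  rcases hC with ⟨i,hi1,hi2,rfl⟩|⟨j,hj,rfl⟩|⟨j,hj,rfl⟩|⟨k,hk,rfl⟩ <;>
    rcases hC' with ⟨i',hi1',hi2',rfl⟩|⟨j',hj',rfl⟩|⟨j',hj',rfl⟩|⟨k',hk',rfl⟩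
  · rw [hv_I n i hn hi2, hv_I n i' hn hi2'] at h; omega
  · rw [hv_I n i hn hi2, hv_J n j' hn hj'] at h
    have : j' = i - 1 := by omega
    subst this
    exact ⟨i, hi1, hi2, Or.inr (Or.inr (Or.inr (Or.inl ⟨rfl, rfl⟩)))⟩
  · rw [hv_I n i hn hi2, hv_JP n j' hn hj'] at h; omega
  · rw [hv_I n i hn hi2, hv_K n k' hn hk'] at h; omega
  · rw [hv_J n j hn hj, hv_I n i' hn hi2'] at h; omega
  · rw [hv_J n j hn hj, hv_J n j' hn hj'] at h; omega
  · rw [hv_J n j hn hj, hv_JP n j' hn hj'] at h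
    have hjj : j' = j := by omega
    subst hjj
    by_cases hj1 : 1 ≤ j'
    · exact ⟨j', hj1, hj', Or.inl ⟨rfl, rfl⟩⟩
    · have : j' = 0 := by omega
      subst this
      exact ⟨1, le_refl 1, by omega, Or.inr (Or.inr (Or.inr (Or.inr (Or.inr ⟨rfl, rfl⟩))))⟩
  · rw [hv_J n j hn hj, hv_K n k' hn hk'] at h; omega
  · rw [hv_JP n j hn hj, hv_I n i' hn hi2'] at h
    have : i' = j := by omega
    subst this
    exact ⟨i', hi1', hi2', Or.inr (Or.inl ⟨rfl, rfl⟩)⟩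
  · rw [hv_JP n j hn hj, hv_J n j' hn hj'] at h; omega
  · rw [hv_JP n j hn hj, hv_JP n j' hn hj'] at h; omega
  · rw [hv_JP n j hn hj, hv_K n k' hn hk'] at h
    have hjk : j = k' + 1 := by omega
    subst hjk
    exact ⟨k'+1, by omega, by omega, Or.inr (Or.inr (Or.inl ⟨rfl, rfl⟩))⟩
  · rw [hv_K n k hn hk, hv_I n i' hn hi2'] at h; omega
  · rw [hv_K n k hn hk, hv_J n j' hn hj'] at h
    have : j' = k := by omega
    rw [this]
    exact ⟨k+1, by omega, by omega, Or.inr (Or.inr (Or.inr (Or.inr (Or.inl ⟨rfl, rfl⟩))))⟩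
  · rw [hv_K n k hn hk, hv_JP n j' hn hj'] at h; omega
  · rw [hv_K n k hn hk, hv_K n k' hn hk'] at h; omega

lemma reach (n : ℕ) (hn : 2 ≤ n) : ∀ d : ℕ, ∀ C C' : Finset (Fin (2*n)), C ∈ LSet n → C' ∈ LSet n →
    hv n C + d = hv n C' → 1 ≤ d → LLE n C C' := by
  intro d
  induction d with
  | zero => intro C C' _ _ _ h; omega
  | succ d ih =>
    intro C C' hC hC' hEq _
    by_cases hd : d = 0
    · subst hd
      exact Relation.ReflTransGen.single (adj n hn hC hC' (by push_cast at hEq; linarith))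
    · have hb := hv_bound n hn hC'
      obtain ⟨D, hgen⟩ := succ_ex n hn hC (by push_cast at hEq; omega)
      have hD : D ∈ LSet n := lgen_mem_right n hgen
      have hstep := hv_step n hn hgen
      exact Relation.ReflTransGen.head hgen (ih D C' hD hC' (by push_cast at hEq ⊢; omega) (by omega))

lemma lle_cases (n : ℕ) (hn : 2 ≤ n) {C C' : Finset (Fin (2*n))} (h : LLE n C C') :
    C = C' ∨ hv n C < hv n C' := by
  induction h with
  | refl => exact Or.inl rfl
  | tail h1 h2 ih =>
    right
    have hstep := hv_step n hn h2
    rcases ih with rfl | hlt <;> linarith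

lemma eq_hv_cases (n : ℕ) (hn : 2 ≤ n) {C C' : Finset (Fin (2*n))} (hC : C ∈ LSet n) (hC' : C' ∈ LSet n)
    (h : hv n C = hv n C') :
    C = C' ∨ ∃ k, k ≤ n-2 ∧ ((C = Iset n (k+1) ∧ C' = Kset n k) ∨ (C = Kset n k ∧ C' = Iset n (k+1))) := by
  rcases hC with ⟨i,hi1,hi2,rfl⟩|⟨j,hj,rfl⟩|⟨j,hj,rfl⟩|⟨k,hk,rfl⟩ <;>
    rcases hC' with ⟨i',hi1',hi2',rfl⟩|⟨j',hj',rfl⟩|⟨j',hj',rfl⟩|⟨k',hk',rfl⟩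
  · rw [hv_I n i hn hi2, hv_I n i' hn hi2'] at h
    have : i = i' := by omega
    subst this; exact Or.inl rfl
  · rw [hv_I n i hn hi2, hv_J n j' hn hj'] at h; omega
  · rw [hv_I n i hn hi2, hv_JP n j' hn hj'] at h; omega
  · rw [hv_I n i hn hi2, hv_K n k' hn hk'] at h
    have : i = k' + 1 := by omega
    subst this
    exact Or.inr ⟨k', hk', Or.inl ⟨rfl, rfl⟩⟩
  · rw [hv_J n j hn hj, hv_I n i' hn hi2'] at h; omega
  · rw [hv_J n j hn hj, hv_J n j' hn hj'] at h
    have : j = j' := by omega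
    subst this; exact Or.inl rfl
  · rw [hv_J n j hn hj, hv_JP n j' hn hj'] at h; omega
  · rw [hv_J n j hn hj, hv_K n k' hn hk'] at h; omega
  · rw [hv_JP n j hn hj, hv_I n i' hn hi2'] at h; omega
  · rw [hv_JP n j hn hj, hv_J n j' hn hj'] at h; omega
  · rw [hv_JP n j hn hj, hv_JP n j' hn hj'] at h
    have : j = j' := by omega
    subst this; exact Or.inl rfl
  · rw [hv_JP n j hn hj, hv_K n k' hn hk'] at h; omega
  · rw [hv_K n k hn hk, hv_I n i' hn hi2'] at h
    have : i' = k + 1 := by omega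
    subst this
    exact Or.inr ⟨k, hk, Or.inr ⟨rfl, rfl⟩⟩
  · rw [hv_K n k hn hk, hv_J n j' hn hj'] at h; omega
  · rw [hv_K n k hn hk, hv_JP n j' hn hj'] at h; omega
  · rw [hv_K n k hn hk, hv_K n k' hn hk'] at h
    have : k = k' := by omega
    subst this; exact Or.inl rfl



lemma sat_I (n i : ℕ) (hn : 2 ≤ n) (h1 : 1 ≤ i) (h2 : i ≤ n-1) {σ : ℕ → Bool}
    (h : SatisfiesType n (Iset n i) σ) : σ i = true := by
  rcases h with ⟨i',hi1',hi2',heq,hσ⟩|⟨k,hk,heq,hσ⟩|⟨j,hj,heq⟩|⟨j,hj,heq⟩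
  · have hvv : hv n (Iset n i) = hv n (Iset n i') := by rw [heq]
    rw [hv_I n i hn h2, hv_I n i' hn hi2'] at hvv
    have : i' = i := by omega
    subst this; exact hσ
  · exact absurd (heq ▸ exn_K n k hn) (noexn_I n i h2)
  · exact absurd (heq ▸ exn_J n j hn) (noexn_I n i h2)
  · exact absurd (heq ▸ exn1_JP n j hn) (noexn1_I n i h2)

lemma sat_K (n k : ℕ) (hn : 2 ≤ n) (hk : k ≤ n-2) {σ : ℕ → Bool}
    (h : SatisfiesType n (Kset n k) σ) : σ (k+1) = false := by
  rcases h with ⟨i',hi1',hi2',heq,hσ⟩|⟨k',hk',heq,hσ⟩|⟨j,hj,heq⟩|⟨j,hj,heq⟩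
  · exact absurd (exn_K n k hn) (heq ▸ noexn_I n i' hi2')
  · have hvv : hv n (Kset n k) = hv n (Kset n k') := by rw [heq]
    rw [hv_K n k hn hk, hv_K n k' hn hk'] at hvv
    have : k' = k := by omega
    subst this; exact hσ
  · exact absurd (exn1_K n k hn) (heq ▸ noexn1_J n j hj)
  · exact absurd (exn_K n k hn) (heq ▸ noexn_JP n j hn hj)

lemma IK_ne (n k : ℕ) (hn : 2 ≤ n) (hk : k ≤ n-2) : Iset n (k+1) ≠ Kset n k := by
  intro he
  exact noexn_I n (k+1) (by omega) (he ▸ exn_K n k hn)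

/-- a finite collection of elements of `𝓛` is totally ordered by `⪯` iff
there is an order type `σ` satisfied by all its members. -/
theorem statement8 (n : ℕ) (hn : 2 ≤ n) (s : Finset (Finset (Fin (2*n))))
    (hs : ∀ C ∈ s, C ∈ LSet n) :
    (∀ C ∈ s, ∀ C' ∈ s, LLE n C C' ∨ LLE n C' C) ↔
      ∃ σ : ℕ → Bool, ∀ C ∈ s, SatisfiesType n C σ := by
  constructor
  · intro hchain
    refine ⟨fun i => decide (Iset n i ∈ s), ?_⟩
    intro C hCs
    rcases hs C hCs with ⟨i,hi1,hi2,rfl⟩|⟨j,hj,rfl⟩|⟨j,hj,rfl⟩|⟨k,hk,rfl⟩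
    · exact Or.inl ⟨i, hi1, hi2, rfl, by simp [hCs]⟩
    · exact Or.inr (Or.inr (Or.inl ⟨j, hj, rfl⟩))
    · exact Or.inr (Or.inr (Or.inr ⟨j, hj, rfl⟩))
    · refine Or.inr (Or.inl ⟨k, hk, rfl, ?_⟩)
      simp only [decide_eq_false_iff_not]
      intro hI
      have hcmp := hchain _ hI _ hCs
      have h1 : hv n (Iset n (k+1)) = hv n (Kset n k) := by
        rw [hv_I n (k+1) hn (by omega), hv_K n k hn hk]
        push_cast; ring
      have hne := IK_ne n k hn hk
      rcases hcmp with h|h <;> rcases lle_cases n hn h with he|hlt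
      · exact hne he
      · omega
      · exact hne he.symm
      · omega
  · rintro ⟨σ, hσ⟩ C hCs C' hC's
    have hC := hs C hCs
    have hC' := hs C' hC's
    rcases lt_trichotomy (hv n C) (hv n C') with hlt|heq|hgt
    · left
      have h1 : (0:ℤ) ≤ hv n C' - hv n C := by linarith
      have h2 : (((hv n C' - hv n C).toNat : ℤ)) = hv n C' - hv n C := Int.toNat_of_nonneg h1
      refine reach n hn (hv n C' - hv n C).toNat C C' hC hC' (by linarith) ?_
      by_contra hcon
      push_neg at hcon
      interval_cases h : (hv n C' - hv n C).toNat
      simp at h2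
      linarith
    · rcases eq_hv_cases n hn hC hC' heq with rfl|⟨k, hk, ⟨rfl,rfl⟩|⟨rfl,rfl⟩⟩
      · exact Or.inl Relation.ReflTransGen.refl
      · have ht := sat_I n (k+1) hn (by omega) (by omega) (hσ _ hCs)
        have hf := sat_K n k hn hk (hσ _ hC's)
        rw [ht] at hf; exact absurd hf (by simp)
      · have ht := sat_I n (k+1) hn (by omega) (by omega) (hσ _ hC's)
        have hf := sat_K n k hn hk (hσ _ hCs)
        rw [ht] at hf; exact absurd hf (by simp)
    · right
      have h1 : (0:ℤ) ≤ hv n C - hv n C' := by linarith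
      have h2 : (((hv n C - hv n C').toNat : ℤ)) = hv n C - hv n C' := Int.toNat_of_nonneg h1
      refine reach n hn (hv n C - hv n C').toNat C' C hC' hC (by linarith) ?_
      by_contra hcon
      push_neg at hcon
      interval_cases h : (hv n C - hv n C').toNat
      simp at h2
      linarith

end SpBranch
end
end

section
/- The poset (𝓛, ⪯) is a distributive lattice. Moreover, a pair of distinct elements of 𝓛 is incomparable if and only if it is of the form {I_i, K_{i−1}} for some 1 ≤ i ≤ n−1, and for each such pair the meet and join are given by I_i ∧ K_{i−1} = J′_i and I_i ∨ K_{i−1} = J_{i−1}. -/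
noncomputable section

namespace SpBranch


-- ## auxiliary development
open scoped Classical

variable {n : ℕ}

lemma card_filter_eq (p : Fin (2*n) → Prop) [DecidablePred p] (t : ℕ) (ht : t ≤ 2*n)
    (hp : ∀ x, p x ↔ (x:ℕ)+1 ≤ t) : (Finset.univ.filter p).card = t := by
  have h : Finset.univ.filter p
      = (Finset.range t).attachFin (fun m hm => by rw [Finset.mem_range] at hm; omega) := by
    ext x
    simp only [Finset.mem_filter, Finset.mem_univ, true_and, Finset.mem_attachFin,
      Finset.mem_range, hp]
    omega
  rw [h, Finset.card_attachFin, Finset.card_range]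

lemma mC_Iset (hn : 2 ≤ n) {i : ℕ} (hi : i ≤ n-1) : mC n (Iset n i) (n-1) = i := by
  unfold mC Iset
  rw [Finset.filter_filter]
  exact card_filter_eq _ i (by omega) (fun x => by omega)

lemma mC_Jset (hn : 2 ≤ n) {j : ℕ} (hj : j ≤ n-1) : mC n (Jset n j) (n-1) = j := by
  unfold mC Jset
  rw [Finset.filter_filter]
  exact card_filter_eq _ j (by omega) (fun x => by omega)

lemma mC_JPset (hn : 2 ≤ n) {j : ℕ} (hj : j ≤ n-1) : mC n (JPset n j) (n-1) = j := by
  unfold mC JPset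
  rw [Finset.filter_filter]
  exact card_filter_eq _ j (by omega) (fun x => by omega)

lemma mC_Kset (hn : 2 ≤ n) {k : ℕ} (hk : k ≤ n-2) : mC n (Kset n k) (n-1) = k := by
  unfold mC Kset
  rw [Finset.filter_filter]
  exact card_filter_eq _ k (by omega) (fun x => by omega)

def phi (n : ℕ) (C : Finset (Fin (2*n))) : ℕ × ℕ :=
  if (∃ x ∈ C, (x:ℕ) + 1 = n) then
    (if (∃ x ∈ C, (x:ℕ) + 1 = n + 1) then
      (2*(n-1-mC n C (n-1)) - 1, 2*(n-1-mC n C (n-1)))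
     else (2*(n-1-mC n C (n-1)), 2*(n-1-mC n C (n-1))))
  else
    (if (∃ x ∈ C, (x:ℕ) + 1 = n + 1) then
      (2*(n-1-mC n C (n-1)) + 1, 2*(n-1-mC n C (n-1)) + 1)
     else (2*(n-1-mC n C (n-1)) + 2, 2*(n-1-mC n C (n-1)) + 1))

lemma phi_Iset (hn : 2 ≤ n) {i : ℕ} (hi1 : 1 ≤ i) (hi2 : i ≤ n-1) :
    phi n (Iset n i) = (2*(n-1-i) + 2, 2*(n-1-i) + 1) := by
  have h1 : ¬ ∃ x ∈ Iset n i, (x:ℕ) + 1 = n := by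
    rintro ⟨x, hx, he⟩; simp only [Iset, Finset.mem_filter] at hx; omega
  have h2 : ¬ ∃ x ∈ Iset n i, (x:ℕ) + 1 = n + 1 := by
    rintro ⟨x, hx, he⟩; simp only [Iset, Finset.mem_filter] at hx; omega
  unfold phi
  rw [if_neg h1, if_neg h2, mC_Iset hn hi2]

lemma phi_Jset (hn : 2 ≤ n) {j : ℕ} (hj : j ≤ n-1) :
    phi n (Jset n j) = (2*(n-1-j), 2*(n-1-j)) := by
  have h1 : ∃ x ∈ Jset n j, (x:ℕ) + 1 = n := by
    refine ⟨⟨n-1, by omega⟩, ?_, by simp; omega⟩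
    simp only [Jset, Finset.mem_filter, Finset.mem_univ, true_and]
    right; show n - 1 + 1 = n; omega
  have h2 : ¬ ∃ x ∈ Jset n j, (x:ℕ) + 1 = n + 1 := by
    rintro ⟨x, hx, he⟩; simp only [Jset, Finset.mem_filter] at hx; omega
  unfold phi
  rw [if_pos h1, if_neg h2, mC_Jset hn hj]

lemma phi_JPset (hn : 2 ≤ n) {j : ℕ} (hj : j ≤ n-1) :
    phi n (JPset n j) = (2*(n-1-j) + 1, 2*(n-1-j) + 1) := by
  have h1 : ¬ ∃ x ∈ JPset n j, (x:ℕ) + 1 = n := by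
    rintro ⟨x, hx, he⟩; simp only [JPset, Finset.mem_filter] at hx; omega
  have h2 : ∃ x ∈ JPset n j, (x:ℕ) + 1 = n + 1 := by
    refine ⟨⟨n, by omega⟩, ?_, by simp⟩
    simp only [JPset, Finset.mem_filter, Finset.mem_univ, true_and]
    right; simp
  unfold phi
  rw [if_neg h1, if_pos h2, mC_JPset hn hj]

lemma phi_Kset (hn : 2 ≤ n) {k : ℕ} (hk : k ≤ n-2) :
    phi n (Kset n k) = (2*(n-1-k) - 1, 2*(n-1-k)) := by
  have h1 : ∃ x ∈ Kset n k, (x:ℕ) + 1 = n := by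
    refine ⟨⟨n-1, by omega⟩, ?_, by simp; omega⟩
    simp only [Kset, Finset.mem_filter, Finset.mem_univ, true_and]
    right; left; show n - 1 + 1 = n; omega
  have h2 : ∃ x ∈ Kset n k, (x:ℕ) + 1 = n + 1 := by
    refine ⟨⟨n, by omega⟩, ?_, by simp⟩
    simp only [Kset, Finset.mem_filter, Finset.mem_univ, true_and]
    right; right; simp
  unfold phi
  rw [if_pos h1, if_pos h2, mC_Kset hn hk]


-- ## generator steps
lemma genA {i : ℕ} (h1 : 1 ≤ i) (h2 : i ≤ n-1) : LGen n (Jset n i) (JPset n i) :=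
  ⟨i, h1, h2, Or.inl ⟨rfl, rfl⟩⟩
lemma genB {i : ℕ} (h1 : 1 ≤ i) (h2 : i ≤ n-1) : LGen n (JPset n i) (Iset n i) :=
  ⟨i, h1, h2, Or.inr (Or.inl ⟨rfl, rfl⟩)⟩
lemma genC {i : ℕ} (h1 : 1 ≤ i) (h2 : i ≤ n-1) : LGen n (JPset n i) (Kset n (i-1)) :=
  ⟨i, h1, h2, Or.inr (Or.inr (Or.inl ⟨rfl, rfl⟩))⟩
lemma genD {i : ℕ} (h1 : 1 ≤ i) (h2 : i ≤ n-1) : LGen n (Iset n i) (Jset n (i-1)) :=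
  ⟨i, h1, h2, Or.inr (Or.inr (Or.inr (Or.inl ⟨rfl, rfl⟩)))⟩
lemma genE {i : ℕ} (h1 : 1 ≤ i) (h2 : i ≤ n-1) : LGen n (Kset n (i-1)) (Jset n (i-1)) :=
  ⟨i, h1, h2, Or.inr (Or.inr (Or.inr (Or.inr (Or.inl ⟨rfl, rfl⟩))))⟩
lemma genF {i : ℕ} (h1 : 1 ≤ i) (h2 : i ≤ n-1) : LGen n (Jset n (i-1)) (JPset n (i-1)) :=
  ⟨i, h1, h2, Or.inr (Or.inr (Or.inr (Or.inr (Or.inr ⟨rfl, rfl⟩))))⟩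

-- ## composite LLE lemmas
lemma lleJ_JP (hn : 2 ≤ n) {j : ℕ} (hj : j ≤ n-1) : LLE n (Jset n j) (JPset n j) := by
  rcases Nat.eq_zero_or_pos j with h | h
  · subst h
    have hg := genF (n := n) (i := 1) le_rfl (by omega)
    norm_num at hg
    exact Relation.ReflTransGen.single hg
  · exact Relation.ReflTransGen.single (genA h hj)

lemma lleJP_I {i : ℕ} (h1 : 1 ≤ i) (h2 : i ≤ n-1) : LLE n (JPset n i) (Iset n i) :=
  Relation.ReflTransGen.single (genB h1 h2)
lemma lleJP_K {i : ℕ} (h1 : 1 ≤ i) (h2 : i ≤ n-1) : LLE n (JPset n i) (Kset n (i-1)) :=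
  Relation.ReflTransGen.single (genC h1 h2)
lemma lleI_J {i : ℕ} (h1 : 1 ≤ i) (h2 : i ≤ n-1) : LLE n (Iset n i) (Jset n (i-1)) :=
  Relation.ReflTransGen.single (genD h1 h2)
lemma lleK_J (hn : 2 ≤ n) {k : ℕ} (hk : k ≤ n-2) : LLE n (Kset n k) (Jset n k) := by
  have hg := genE (n := n) (i := k+1) (by omega) (by omega)
  norm_num at hg
  exact Relation.ReflTransGen.single hg
lemma lleJ_I (hn : 2 ≤ n) {i : ℕ} (h1 : 1 ≤ i) (h2 : i ≤ n-1) :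
    LLE n (Jset n i) (Iset n i) :=
  (lleJ_JP hn h2).trans (lleJP_I h1 h2)
lemma lleJ_K (hn : 2 ≤ n) {k : ℕ} (hk : k ≤ n-2) : LLE n (Jset n (k+1)) (Kset n k) := by
  have h := (lleJ_JP hn (j := k+1) (by omega)).trans (lleJP_K (i := k+1) (by omega) (by omega))
  norm_num at h
  exact h
lemma lleJP_J {i : ℕ} (h1 : 1 ≤ i) (h2 : i ≤ n-1) : LLE n (JPset n i) (Jset n (i-1)) :=
  (lleJP_I h1 h2).trans (lleI_J h1 h2)
lemma lleJstep (hn : 2 ≤ n) {i : ℕ} (h1 : 1 ≤ i) (h2 : i ≤ n-1) :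
    LLE n (Jset n i) (Jset n (i-1)) :=
  (lleJ_JP hn h2).trans (lleJP_J h1 h2)

lemma lleJ_mono (hn : 2 ≤ n) : ∀ {j j' : ℕ}, j' ≤ j → j ≤ n-1 → LLE n (Jset n j) (Jset n j') := by
  intro j
  induction j with
  | zero =>
    intro j' h _
    obtain rfl : j' = 0 := by omega
    exact Relation.ReflTransGen.refl
  | succ t ih =>
    intro j' h hj
    rcases Nat.lt_or_ge j' (t+1) with hlt | hge
    · have hstep := lleJstep hn (i := t+1) (by omega) hj
      norm_num at hstep
      exact hstep.trans (ih (by omega) (by omega))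
    · obtain rfl : j' = t+1 := by omega
      exact Relation.ReflTransGen.refl

lemma upJ (hn : 2 ≤ n) {a j' : ℕ} (h : j' ≤ a) (ha : a ≤ n-1) :
    LLE n (Jset n a) (Jset n j') := lleJ_mono hn h ha
lemma upJP (hn : 2 ≤ n) {a j' : ℕ} (h : j' ≤ a) (ha : a ≤ n-1) :
    LLE n (Jset n a) (JPset n j') :=
  (lleJ_mono hn h ha).trans (lleJ_JP hn (le_trans h ha))
lemma upI (hn : 2 ≤ n) {a i' : ℕ} (h1 : 1 ≤ i') (h : i' ≤ a) (ha : a ≤ n-1) :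
    LLE n (Jset n a) (Iset n i') :=
  (lleJ_mono hn h ha).trans (lleJ_I hn h1 (le_trans h ha))
lemma upK (hn : 2 ≤ n) {a k' : ℕ} (h : k'+1 ≤ a) (ha : a ≤ n-1) :
    LLE n (Jset n a) (Kset n k') :=
  (lleJ_mono hn h ha).trans (lleJ_K hn (by omega))



lemma phi_le_of_gen (hn : 2 ≤ n) {x y : Finset (Fin (2*n))} (h : LGen n x y) :
    phi n x ≤ phi n y := by
  obtain ⟨i, h1, h2, hc⟩ := h
  rcases hc with ⟨rfl, rfl⟩ | ⟨rfl, rfl⟩ | ⟨rfl, rfl⟩ | ⟨rfl, rfl⟩ | ⟨rfl, rfl⟩ | ⟨rfl, rfl⟩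
  · rw [phi_Jset hn h2, phi_JPset hn h2, Prod.mk_le_mk]; omega
  · rw [phi_JPset hn h2, phi_Iset hn h1 h2, Prod.mk_le_mk]; omega
  · rw [phi_JPset hn h2, phi_Kset hn (by omega), Prod.mk_le_mk]; omega
  · rw [phi_Iset hn h1 h2, phi_Jset hn (by omega), Prod.mk_le_mk]; omega
  · rw [phi_Kset hn (by omega), phi_Jset hn (by omega), Prod.mk_le_mk]; omega
  · rw [phi_Jset hn (by omega), phi_JPset hn (by omega), Prod.mk_le_mk]; omega

lemma phi_le_of_lle (hn : 2 ≤ n) {x y : Finset (Fin (2*n))} (h : LLE n x y) :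
    phi n x ≤ phi n y := by
  induction h with
  | refl => exact le_rfl
  | tail _ hg ih => exact le_trans ih (phi_le_of_gen hn hg)

lemma lle_of_phi_le (hn : 2 ≤ n) {x y : Finset (Fin (2*n))}
    (hx : x ∈ LSet n) (hy : y ∈ LSet n) (h : phi n x ≤ phi n y) : LLE n x y := by
  simp only [LSet, Set.mem_setOf_eq] at hx hy
  rcases hx with ⟨i, hi1, hi2, rfl⟩ | ⟨j, hj, rfl⟩ | ⟨j, hj, rfl⟩ | ⟨k, hk, rfl⟩ <;>
    rcases hy with ⟨i', hi1', hi2', rfl⟩ | ⟨j', hj', rfl⟩ | ⟨j', hj', rfl⟩ | ⟨k', hk', rfl⟩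
  -- x = I_i
  · rw [phi_Iset hn hi1 hi2, phi_Iset hn hi1' hi2', Prod.mk_le_mk] at h
    rcases Nat.lt_or_ge i' i with hlt | hge
    · exact (lleI_J hi1 hi2).trans (upI hn hi1' (by omega) (by omega))
    · obtain rfl : i' = i := by omega
      exact Relation.ReflTransGen.refl
  · rw [phi_Iset hn hi1 hi2, phi_Jset hn hj', Prod.mk_le_mk] at h
    exact (lleI_J hi1 hi2).trans (upJ hn (by omega) (by omega))
  · rw [phi_Iset hn hi1 hi2, phi_JPset hn hj', Prod.mk_le_mk] at h
    exact (lleI_J hi1 hi2).trans (upJP hn (by omega) (by omega))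
  · rw [phi_Iset hn hi1 hi2, phi_Kset hn hk', Prod.mk_le_mk] at h
    exact (lleI_J hi1 hi2).trans (upK hn (by omega) (by omega))
  -- x = J_j
  · rw [phi_Jset hn hj, phi_Iset hn hi1' hi2', Prod.mk_le_mk] at h
    exact upI hn hi1' (by omega) hj
  · rw [phi_Jset hn hj, phi_Jset hn hj', Prod.mk_le_mk] at h
    exact upJ hn (by omega) hj
  · rw [phi_Jset hn hj, phi_JPset hn hj', Prod.mk_le_mk] at h
    exact upJP hn (by omega) hj
  · rw [phi_Jset hn hj, phi_Kset hn hk', Prod.mk_le_mk] at h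
    exact upK hn (by omega) hj
  -- x = J'_j
  · rw [phi_JPset hn hj, phi_Iset hn hi1' hi2', Prod.mk_le_mk] at h
    rcases Nat.lt_or_ge i' j with hlt | hge
    · exact (lleJP_J (by omega) hj).trans (upI hn hi1' (by omega) (by omega))
    · obtain rfl : i' = j := by omega
      exact lleJP_I hi1' hi2'
  · rw [phi_JPset hn hj, phi_Jset hn hj', Prod.mk_le_mk] at h
    exact (lleJP_J (by omega) hj).trans (upJ hn (by omega) (by omega))
  · rw [phi_JPset hn hj, phi_JPset hn hj', Prod.mk_le_mk] at h
    rcases Nat.lt_or_ge j' j with hlt | hge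
    · exact (lleJP_J (by omega) hj).trans (upJP hn (by omega) (by omega))
    · obtain rfl : j' = j := by omega
      exact Relation.ReflTransGen.refl
  · rw [phi_JPset hn hj, phi_Kset hn hk', Prod.mk_le_mk] at h
    rcases Nat.lt_or_ge (k'+1) j with hlt | hge
    · exact (lleJP_J (by omega) hj).trans (upK hn (by omega) (by omega))
    · obtain rfl : j = k'+1 := by omega
      have hg := lleJP_K (n := n) (i := k'+1) (by omega) (by omega)
      norm_num at hg
      exact hg
  -- x = K_k
  · rw [phi_Kset hn hk, phi_Iset hn hi1' hi2', Prod.mk_le_mk] at h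
    exact (lleK_J hn hk).trans (upI hn hi1' (by omega) (by omega))
  · rw [phi_Kset hn hk, phi_Jset hn hj', Prod.mk_le_mk] at h
    exact (lleK_J hn hk).trans (upJ hn (by omega) (by omega))
  · rw [phi_Kset hn hk, phi_JPset hn hj', Prod.mk_le_mk] at h
    exact (lleK_J hn hk).trans (upJP hn (by omega) (by omega))
  · rw [phi_Kset hn hk, phi_Kset hn hk', Prod.mk_le_mk] at h
    rcases Nat.lt_or_ge k' k with hlt | hge
    · exact (lleK_J hn hk).trans (upK hn (by omega) (by omega))
    · obtain rfl : k' = k := by omega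
      exact Relation.ReflTransGen.refl

lemma phi_injOn (hn : 2 ≤ n) {x y : Finset (Fin (2*n))}
    (hx : x ∈ LSet n) (hy : y ∈ LSet n) (h : phi n x = phi n y) : x = y := by
  simp only [LSet, Set.mem_setOf_eq] at hx hy
  rcases hx with ⟨i, hi1, hi2, rfl⟩ | ⟨j, hj, rfl⟩ | ⟨j, hj, rfl⟩ | ⟨k, hk, rfl⟩ <;>
    rcases hy with ⟨i', hi1', hi2', rfl⟩ | ⟨j', hj', rfl⟩ | ⟨j', hj', rfl⟩ | ⟨k', hk', rfl⟩
  · rw [phi_Iset hn hi1 hi2, phi_Iset hn hi1' hi2', Prod.mk.injEq] at h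
    obtain rfl : i = i' := by omega
    rfl
  · rw [phi_Iset hn hi1 hi2, phi_Jset hn hj', Prod.mk.injEq] at h; exact absurd h (by omega)
  · rw [phi_Iset hn hi1 hi2, phi_JPset hn hj', Prod.mk.injEq] at h; exact absurd h (by omega)
  · rw [phi_Iset hn hi1 hi2, phi_Kset hn hk', Prod.mk.injEq] at h; exact absurd h (by omega)
  · rw [phi_Jset hn hj, phi_Iset hn hi1' hi2', Prod.mk.injEq] at h; exact absurd h (by omega)
  · rw [phi_Jset hn hj, phi_Jset hn hj', Prod.mk.injEq] at h
    obtain rfl : j = j' := by omega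
    rfl
  · rw [phi_Jset hn hj, phi_JPset hn hj', Prod.mk.injEq] at h; exact absurd h (by omega)
  · rw [phi_Jset hn hj, phi_Kset hn hk', Prod.mk.injEq] at h; exact absurd h (by omega)
  · rw [phi_JPset hn hj, phi_Iset hn hi1' hi2', Prod.mk.injEq] at h; exact absurd h (by omega)
  · rw [phi_JPset hn hj, phi_Jset hn hj', Prod.mk.injEq] at h; exact absurd h (by omega)
  · rw [phi_JPset hn hj, phi_JPset hn hj', Prod.mk.injEq] at h
    obtain rfl : j = j' := by omega
    rfl
  · rw [phi_JPset hn hj, phi_Kset hn hk', Prod.mk.injEq] at h; exact absurd h (by omega)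
  · rw [phi_Kset hn hk, phi_Iset hn hi1' hi2', Prod.mk.injEq] at h; exact absurd h (by omega)
  · rw [phi_Kset hn hk, phi_Jset hn hj', Prod.mk.injEq] at h; exact absurd h (by omega)
  · rw [phi_Kset hn hk, phi_JPset hn hj', Prod.mk.injEq] at h; exact absurd h (by omega)
  · rw [phi_Kset hn hk, phi_Kset hn hk', Prod.mk.injEq] at h
    obtain rfl : k = k' := by omega
    rfl

lemma incomp_iff (hn : 2 ≤ n) {x y : Finset (Fin (2*n))}
    (hx : x ∈ LSet n) (hy : y ∈ LSet n) :
    (¬ phi n x ≤ phi n y ∧ ¬ phi n y ≤ phi n x) ↔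
      ∃ i, 1 ≤ i ∧ i ≤ n - 1 ∧
        ((x = Iset n i ∧ y = Kset n (i-1)) ∨ (x = Kset n (i-1) ∧ y = Iset n i)) := by
  constructor
  · rintro ⟨h1, h2⟩
    simp only [LSet, Set.mem_setOf_eq] at hx hy
    rcases hx with ⟨i, hi1, hi2, rfl⟩ | ⟨j, hj, rfl⟩ | ⟨j, hj, rfl⟩ | ⟨k, hk, rfl⟩ <;>
      rcases hy with ⟨i', hi1', hi2', rfl⟩ | ⟨j', hj', rfl⟩ | ⟨j', hj', rfl⟩ | ⟨k', hk', rfl⟩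
    · rw [phi_Iset hn hi1 hi2, phi_Iset hn hi1' hi2', Prod.mk_le_mk] at h1 h2; exact absurd trivial (by omega)
    · rw [phi_Iset hn hi1 hi2, phi_Jset hn hj', Prod.mk_le_mk] at h1 h2; exact absurd trivial (by omega)
    · rw [phi_Iset hn hi1 hi2, phi_JPset hn hj', Prod.mk_le_mk] at h1 h2; exact absurd trivial (by omega)
    · rw [phi_Iset hn hi1 hi2, phi_Kset hn hk', Prod.mk_le_mk] at h1 h2
      obtain rfl : k' = i - 1 := by omega
      exact ⟨i, hi1, hi2, Or.inl ⟨rfl, rfl⟩⟩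
    · rw [phi_Jset hn hj, phi_Iset hn hi1' hi2', Prod.mk_le_mk] at h1 h2; exact absurd trivial (by omega)
    · rw [phi_Jset hn hj, phi_Jset hn hj', Prod.mk_le_mk] at h1 h2; exact absurd trivial (by omega)
    · rw [phi_Jset hn hj, phi_JPset hn hj', Prod.mk_le_mk] at h1 h2; exact absurd trivial (by omega)
    · rw [phi_Jset hn hj, phi_Kset hn hk', Prod.mk_le_mk] at h1 h2; exact absurd trivial (by omega)
    · rw [phi_JPset hn hj, phi_Iset hn hi1' hi2', Prod.mk_le_mk] at h1 h2; exact absurd trivial (by omega)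
    · rw [phi_JPset hn hj, phi_Jset hn hj', Prod.mk_le_mk] at h1 h2; exact absurd trivial (by omega)
    · rw [phi_JPset hn hj, phi_JPset hn hj', Prod.mk_le_mk] at h1 h2; exact absurd trivial (by omega)
    · rw [phi_JPset hn hj, phi_Kset hn hk', Prod.mk_le_mk] at h1 h2; exact absurd trivial (by omega)
    · rw [phi_Kset hn hk, phi_Iset hn hi1' hi2', Prod.mk_le_mk] at h1 h2
      obtain rfl : k = i' - 1 := by omega
      exact ⟨i', hi1', hi2', Or.inr ⟨rfl, rfl⟩⟩
    · rw [phi_Kset hn hk, phi_Jset hn hj', Prod.mk_le_mk] at h1 h2; exact absurd trivial (by omega)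
    · rw [phi_Kset hn hk, phi_JPset hn hj', Prod.mk_le_mk] at h1 h2; exact absurd trivial (by omega)
    · rw [phi_Kset hn hk, phi_Kset hn hk', Prod.mk_le_mk] at h1 h2; exact absurd trivial (by omega)
  · rintro ⟨i, hi1, hi2, ⟨rfl, rfl⟩ | ⟨rfl, rfl⟩⟩ <;>
      rw [phi_Iset hn hi1 hi2, phi_Kset hn (by omega)] <;>
      exact ⟨fun hc => by rw [Prod.mk_le_mk] at hc; omega,
             fun hc => by rw [Prod.mk_le_mk] at hc; omega⟩

lemma phi_sup_IK (hn : 2 ≤ n) {i : ℕ} (hi1 : 1 ≤ i) (hi2 : i ≤ n-1) :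
    phi n (Iset n i) ⊔ phi n (Kset n (i-1)) = phi n (Jset n (i-1)) := by
  rw [phi_Iset hn hi1 hi2, phi_Kset hn (by omega), phi_Jset hn (by omega)]
  simp only [Prod.sup_def, Prod.mk.injEq]
  constructor <;> omega

lemma phi_inf_IK (hn : 2 ≤ n) {i : ℕ} (hi1 : 1 ≤ i) (hi2 : i ≤ n-1) :
    phi n (Iset n i) ⊓ phi n (Kset n (i-1)) = phi n (JPset n i) := by
  rw [phi_Iset hn hi1 hi2, phi_Kset hn (by omega), phi_JPset hn hi2]
  simp only [Prod.inf_def, Prod.mk.injEq]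
  constructor <;> omega

lemma sup_mem (hn : 2 ≤ n) {x y : Finset (Fin (2*n))} (hx : x ∈ LSet n) (hy : y ∈ LSet n) :
    ∃ z ∈ LSet n, phi n z = phi n x ⊔ phi n y := by
  by_cases h1 : phi n x ≤ phi n y
  · exact ⟨y, hy, (sup_eq_right.mpr h1).symm⟩
  by_cases h2 : phi n y ≤ phi n x
  · exact ⟨x, hx, (sup_eq_left.mpr h2).symm⟩
  obtain ⟨i, hi1, hi2, hd⟩ := (incomp_iff hn hx hy).mp ⟨h1, h2⟩
  have hmem : Jset n (i-1) ∈ LSet n := Or.inr (Or.inl ⟨i-1, by omega, rfl⟩)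
  rcases hd with ⟨rfl, rfl⟩ | ⟨rfl, rfl⟩
  · exact ⟨_, hmem, (phi_sup_IK hn hi1 hi2).symm⟩
  · exact ⟨_, hmem, by rw [sup_comm]; exact (phi_sup_IK hn hi1 hi2).symm⟩

lemma inf_mem (hn : 2 ≤ n) {x y : Finset (Fin (2*n))} (hx : x ∈ LSet n) (hy : y ∈ LSet n) :
    ∃ z ∈ LSet n, phi n z = phi n x ⊓ phi n y := by
  by_cases h1 : phi n x ≤ phi n y
  · exact ⟨x, hx, (inf_eq_left.mpr h1).symm⟩
  by_cases h2 : phi n y ≤ phi n x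
  · exact ⟨y, hy, (inf_eq_right.mpr h2).symm⟩
  obtain ⟨i, hi1, hi2, hd⟩ := (incomp_iff hn hx hy).mp ⟨h1, h2⟩
  have hmem : JPset n i ∈ LSet n := Or.inr (Or.inr (Or.inl ⟨i, hi2, rfl⟩))
  rcases hd with ⟨rfl, rfl⟩ | ⟨rfl, rfl⟩
  · exact ⟨_, hmem, (phi_inf_IK hn hi1 hi2).symm⟩
  · exact ⟨_, hmem, by rw [inf_comm]; exact (phi_inf_IK hn hi1 hi2).symm⟩




/-- STATEMENT 9 test -/
theorem stmt9 (n : ℕ) (hn : 2 ≤ n) :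
    ∃ inst : DistribLattice {C : Finset (Fin (2*n)) // C ∈ LSet n},
      (∀ x y : {C : Finset (Fin (2*n)) // C ∈ LSet n}, inst.le x y ↔ LLE n x.1 y.1) ∧
      (∀ x y : {C : Finset (Fin (2*n)) // C ∈ LSet n}, x ≠ y →
        ((¬ inst.le x y ∧ ¬ inst.le y x) ↔
          ∃ i, 1 ≤ i ∧ i ≤ n - 1 ∧
            ((x.1 = Iset n i ∧ y.1 = Kset n (i-1)) ∨ (x.1 = Kset n (i-1) ∧ y.1 = Iset n i)))) ∧
      (∀ (x y : {C : Finset (Fin (2*n)) // C ∈ LSet n}) (i : ℕ), 1 ≤ i → i ≤ n - 1 →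
        x.1 = Iset n i → y.1 = Kset n (i-1) →
          (inst.inf x y).1 = JPset n i ∧ (inst.sup x y).1 = Jset n (i-1)) := by
  have hinj : Function.Injective (fun x : {C : Finset (Fin (2*n)) // C ∈ LSet n} => phi n x.1) :=
    fun a b h => Subtype.ext (phi_injOn hn a.2 b.2 h)
  have hsupEx : ∀ x y : {C : Finset (Fin (2*n)) // C ∈ LSet n},
      ∃ z : {C : Finset (Fin (2*n)) // C ∈ LSet n}, phi n z.1 = phi n x.1 ⊔ phi n y.1 := by
    intro x y
    obtain ⟨z, hz, he⟩ := sup_mem hn x.2 y.2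
    exact ⟨⟨z, hz⟩, he⟩
  have hinfEx : ∀ x y : {C : Finset (Fin (2*n)) // C ∈ LSet n},
      ∃ z : {C : Finset (Fin (2*n)) // C ∈ LSet n}, phi n z.1 = phi n x.1 ⊓ phi n y.1 := by
    intro x y
    obtain ⟨z, hz, he⟩ := inf_mem hn x.2 y.2
    exact ⟨⟨z, hz⟩, he⟩
  choose supF hsupF using hsupEx
  choose infF hinfF using hinfEx
  letI : Max {C : Finset (Fin (2*n)) // C ∈ LSet n} := ⟨supF⟩
  letI : Min {C : Finset (Fin (2*n)) // C ∈ LSet n} := ⟨infF⟩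
  letI : LE {C : Finset (Fin (2*n)) // C ∈ LSet n} := ⟨fun x y => phi n x.1 ≤ phi n y.1⟩
  letI : LT {C : Finset (Fin (2*n)) // C ∈ LSet n} := ⟨fun x y => phi n x.1 < phi n y.1⟩
  refine ⟨Function.Injective.distribLattice _ hinj Iff.rfl Iff.rfl hsupF hinfF, ?_, ?_, ?_⟩
  · intro x y
    exact ⟨fun h => lle_of_phi_le hn x.2 y.2 h, fun h => phi_le_of_lle hn h⟩
  · intro x y _
    exact incomp_iff hn x.2 y.2
  · intro x y i hi1 hi2 hx hy
    constructor
    · refine phi_injOn hn (infF x y).2 (Or.inr (Or.inr (Or.inl ⟨i, hi2, rfl⟩))) ?_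
      show phi n (infF x y).1 = phi n (JPset n i)
      rw [hinfF x y, hx, hy]
      exact phi_inf_IK hn hi1 hi2
    · refine phi_injOn hn (supF x y).2 (Or.inr (Or.inl ⟨i-1, by omega, rfl⟩)) ?_
      show phi n (supF x y).1 = phi n (Jset n (i-1))
      rw [hsupF x y, hx, hy]
      exact phi_sup_IK hn hi1 hi2

end SpBranch
end
end
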